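/- arXiv:1605.07953 — 9 statements merged into one kernel-verified Lean document; each statement's English description precedes it below -/
import Mathlib

section
/- Let S' be the set of all x ∈ F that have at least one base-b expansion (with digits in A) that is infinitely de Bruijn. Then dim_H(S') ≤ log(k!)/(k·log b) = (log(k!)/(k·log k))·δ, where δ = log k / log b. Since log(k!) < k·log k for all k ≥ 2, this is strictly less than δ. -/
/-- The real number in `[0,1]` whose base-`b` digit sequence is `ω` (so that
`ω 0` is the first digit after the point). -/
noncomputable def baseVal (b : ℕ) (ω : ℕ → ℕ) : ℝ :=
  ∑' i : ℕ, (ω i : ℝ) / (b : ℝ) ^ (i + 1)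

/-- The initial segment of `ω` of length `A.card ^ n + n - 1` is a (non-cyclic)
de Bruijn sequence of order `n` in the alphabet `A`: every word of length `n`
over `A` occurs exactly once as a consecutive substring of that initial segment. -/
def dbPrefix (A : Finset ℕ) (n : ℕ) (ω : ℕ → ℕ) : Prop :=
  ∀ v : ℕ → ℕ, (∀ i < n, v i ∈ A) →
    ∃! j : ℕ, j + n ≤ A.card ^ n + n - 1 ∧ ∀ i < n, ω (j + i) = v i

/-- `B_ω`, the set of orders `n ≥ 1` for which the corresponding initial segment of `ω`
is a de Bruijn sequence of order `n`. -/
def deBruijnSet (A : Finset ℕ) (ω : ℕ → ℕ) : Set ℕ :=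
  {n | 0 < n ∧ dbPrefix A n ω}

/-- `ω` is uniformly de Bruijn: `B_ω` is infinite with bounded gap sizes. -/
def UniformlyDeBruijn (A : Finset ℕ) (ω : ℕ → ℕ) : Prop :=
  ∃ g : ℕ, ∀ N : ℕ, ∃ n ∈ deBruijnSet A ω, N < n ∧ n ≤ N + g

/-- `ω` is infinitely de Bruijn: `B_ω` is infinite. -/
def InfinitelyDeBruijn (A : Finset ℕ) (ω : ℕ → ℕ) : Prop :=
  (deBruijnSet A ω).Infinite

/-- `ω` is totally de Bruijn: `B_ω` contains every `n ≥ 1`. -/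
def TotallyDeBruijn (A : Finset ℕ) (ω : ℕ → ℕ) : Prop :=
  ∀ n : ℕ, 0 < n → dbPrefix A n ω

/-- The limit set `F` of the base-`b` IFS with digit alphabet `A`: all reals having at
least one base-`b` expansion with all digits in `A`. -/
def limitSet (b : ℕ) (A : Finset ℕ) : Set ℝ :=
  {x | ∃ ω : ℕ → ℕ, (∀ i, ω i ∈ A) ∧ x = baseVal b ω}

/-!
A de Bruijn prefix `w` of order `c + 1` over `A` (length `k ^ (c + 1) + c`, `k = #A`) is
determined by its first `c` letters together with, for every context `u ∈ A ^ c`, the injection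
`A ↪ Fin k` sending `a` to the rank of the unique occurrence of `u a` among the occurrences of
`u`: reading `w` from left to right, the context of the next letter and the rank of its
position are already known. So there are at most `k ^ c * (k!) ^ (k ^ c)` such prefixes, each
confining the point to a set of diameter `b ^ -(k ^ (c + 1) + c)`. A point of `S'` lies in such
a set for infinitely many `c`, and for `d > log k! / (k log b)` the weights
`k ^ c * (k!) ^ (k ^ c) * b ^ (-d k ^ (c + 1))` are summable, so the tails of their series are
`d`-dimensional Hausdorff sums of covers of `S'` of vanishing mesh.
-/

open Finset
open scoped Nat

namespace DeBruijn

lemma baseVal_eq_ofDigits {b : ℕ} {ω : ℕ → ℕ} (hω : ∀ i, ω i < b) :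
    baseVal b ω = Real.ofDigits fun i => (⟨ω i, hω i⟩ : Fin b) := by
  simp only [baseVal, Real.ofDigits, Real.ofDigitsTerm, div_eq_mul_inv]

lemma dist_baseVal_le {b L : ℕ} {ω ω' : ℕ → ℕ} (hω : ∀ i, ω i < b) (hω' : ∀ i, ω' i < b)
    (h : ∀ i < L, ω i = ω' i) : dist (baseVal b ω) (baseVal b ω') ≤ ((b : ℝ) ^ L)⁻¹ := by
  rw [Real.dist_eq, baseVal_eq_ofDigits hω, baseVal_eq_ofDigits hω']
  exact Real.abs_ofDigits_sub_ofDigits_le fun i hi => Fin.ext (h i hi)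

def contextRank (c : ℕ) (ω : ℕ → ℕ) (p : ℕ) : ℕ :=
  #{q ∈ range p | ∀ i < c, ω (q + i) = ω (p + i)}

variable {c : ℕ} {ω ω' : ℕ → ℕ}

lemma contextRank_lt_contextRank {p q : ℕ} (hqp : q < p)
    (hctx : ∀ i < c, ω (q + i) = ω (p + i)) : contextRank c ω q < contextRank c ω p := by
  refine card_lt_card ⟨fun r hr => ?_, fun hsub => ?_⟩
  · simp only [mem_filter, mem_range] at hr ⊢
    exact ⟨hr.1.trans hqp, fun i hi => (hr.2 i hi).trans (hctx i hi)⟩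
  · simpa using hsub (mem_filter.mpr ⟨mem_range.mpr hqp, hctx⟩)

lemma eq_of_contextRank_eq {p q : ℕ} (hctx : ∀ i < c, ω (q + i) = ω (p + i))
    (h : contextRank c ω q = contextRank c ω p) : q = p := by
  rcases lt_trichotomy q p with hqp | rfl | hpq
  · exact absurd h (contextRank_lt_contextRank hqp hctx).ne
  · rfl
  · exact absurd h (contextRank_lt_contextRank hpq fun i hi => (hctx i hi).symm).ne'

lemma contextRank_congr {p : ℕ} (h : ∀ i < p + c, ω i = ω' i) :
    contextRank c ω p = contextRank c ω' p := by
  unfold contextRank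
  congr 1
  refine filter_congr fun q hq => forall₂_congr fun i hi => ?_
  rw [mem_range] at hq
  rw [h (q + i) (by omega), h (p + i) (by omega)]

section dbPrefix

variable {A : Finset ℕ} (hdb : dbPrefix A (c + 1) ω) (hA : ∀ i, ω i ∈ A)
include hdb hA

lemma dbPrefix.eq_of_window_eq {p q : ℕ} (hp : p < #A ^ (c + 1)) (hq : q < #A ^ (c + 1))
    (h : ∀ i < c + 1, ω (p + i) = ω (q + i)) : p = q := by
  obtain ⟨j, -, hj⟩ := hdb (fun i => ω (q + i)) fun i _ => hA _
  exact (hj p ⟨by omega, h⟩).trans (hj q ⟨by omega, fun _ _ => rfl⟩).symm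

lemma dbPrefix.contextRank_lt_card {p : ℕ} (hp : p < #A ^ (c + 1)) :
    contextRank c ω p < #A := by
  let sameContext := insert p {q ∈ range p | ∀ i < c, ω (q + i) = ω (p + i)}
  have hcard : #sameContext = contextRank c ω p + 1 := card_insert_of_notMem (by simp)
  have hlast : Set.InjOn (fun q => ω (q + c)) sameContext := by
    intro q hq r hr hqr
    have hctx : ∀ q ∈ sameContext, q ≤ p ∧ ∀ i < c, ω (q + i) = ω (p + i) := by
      simp only [sameContext, mem_insert, mem_filter, mem_range]
      rintro q (rfl | ⟨hq, hctx⟩)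
      exacts [⟨le_rfl, fun _ _ => rfl⟩, ⟨hq.le, hctx⟩]
    obtain ⟨hqp, hq⟩ := hctx q hq
    obtain ⟨hrp, hr⟩ := hctx r hr
    refine dbPrefix.eq_of_window_eq hdb hA (by omega) (by omega) fun i hi => ?_
    obtain hi | rfl := Nat.lt_succ_iff_lt_or_eq.mp hi
    exacts [(hq i hi).trans (hr i hi).symm, hqr]
  have := card_le_card_of_injOn _ (fun q _ => hA (q + c)) hlast
  omega

end dbPrefix

abbrev Code (A : Finset ℕ) (c : ℕ) : Type := (Fin c → A) × ((Fin c → A) → (A ↪ Fin #A))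

def IsCodeOf {A : Finset ℕ} (code : Code A c) (ω : ℕ → ℕ) : Prop :=
  (∀ i : Fin c, ω i = code.1 i) ∧
    ∀ p < #A ^ (c + 1), ∀ (u : Fin c → A) (a : A),
      (∀ i : Fin c, ω (p + i) = u i) → ω (p + c) = a → (code.2 u a : ℕ) = contextRank c ω p

lemma dbPrefix.exists_isCodeOf {A : Finset ℕ} (hdb : dbPrefix A (c + 1) ω) (hA : ∀ i, ω i ∈ A) :
    ∃ code : Code A c, IsCodeOf code ω := by
  let word (u : Fin c → A) (a : A) : ℕ → ℕ := fun i => if h : i < c then u ⟨i, h⟩ else a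
  have hword : ∀ u a, ∀ i < c + 1, word u a i ∈ A := by
    intro u a i _
    unfold word
    split_ifs
    exacts [(u _).2, a.2]
  choose pos hpos huniq using fun u a => hdb (word u a) (hword u a)
  have hpos_lt : ∀ u a, pos u a < #A ^ (c + 1) := fun u a => by have := (hpos u a).1; omega
  let rankOf (u : Fin c → A) : A ↪ Fin #A :=
    ⟨fun a => ⟨contextRank c ω (pos u a), dbPrefix.contextRank_lt_card hdb hA (hpos_lt u a)⟩,
      fun a a' h => by
        have hctx : ∀ i < c, ω (pos u a + i) = ω (pos u a' + i) := fun i hi => by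
          rw [(hpos u a).2 i (by omega), (hpos u a').2 i (by omega)]
          simp [word, hi]
        have hsame := eq_of_contextRank_eq hctx (Fin.ext_iff.mp h)
        have hlast := (hpos u a).2 c (by omega)
        rw [hsame, (hpos u a').2 c (by omega)] at hlast
        simpa [word] using hlast.symm⟩
  refine ⟨(fun i => ⟨ω i, hA i⟩, rankOf), fun _ => rfl, fun p hp u a hctx hlast => ?_⟩
  have hwindow : ∀ i < c + 1, ω (p + i) = word u a i := by
    intro i hi
    obtain hi | rfl := Nat.lt_succ_iff_lt_or_eq.mp hi
    · simpa [word, hi] using hctx ⟨i, hi⟩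
    · simpa [word] using hlast
  rw [huniq u a p ⟨by omega, hwindow⟩]
  rfl

lemma IsCodeOf.eq_of_lt {A : Finset ℕ} {code : Code A c} (hω : IsCodeOf code ω)
    (hω' : IsCodeOf code ω') (hA : ∀ i, ω i ∈ A) (hA' : ∀ i, ω' i ∈ A) :
    ∀ m < #A ^ (c + 1) + c, ω m = ω' m := by
  intro m
  induction m using Nat.strong_induction_on with
  | _ m ih =>
  intro hm
  by_cases hmc : m < c
  · exact (hω.1 ⟨m, hmc⟩).trans (hω'.1 ⟨m, hmc⟩).symm
  obtain ⟨p, rfl⟩ : ∃ p, m = p + c := ⟨m - c, by omega⟩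
  have hbelow : ∀ i < p + c, ω i = ω' i := fun i hi => ih i hi (by omega)
  let u : Fin c → A := fun i => ⟨ω (p + i), hA _⟩
  have hletter := hω.2 p (by omega) u ⟨ω (p + c), hA _⟩ (fun _ => rfl) rfl
  have hletter' := hω'.2 p (by omega) u ⟨ω' (p + c), hA' _⟩
    (fun i => (hbelow _ (by omega)).symm) rfl
  rw [← contextRank_congr hbelow, ← hletter] at hletter'
  exact congrArg Subtype.val ((code.2 u).injective (Fin.ext hletter')).symm

lemma card_code (A : Finset ℕ) (c : ℕ) : Fintype.card (Code A c) = #A ^ c * (#A)! ^ (#A ^ c) := by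
  simp [Fintype.card_embedding_eq, Nat.descFactorial_self]

noncomputable def codeWeight (b : ℕ) (A : Finset ℕ) (d : ℝ) (c : ℕ) : ℝ :=
  Fintype.card (Code A c) * (((b : ℝ) ^ (#A ^ (c + 1) + c))⁻¹) ^ d

lemma codeWeight_le {b : ℕ} (hb : 1 ≤ b) (A : Finset ℕ) {d : ℝ} (hd : 0 ≤ d) (c : ℕ) :
    codeWeight b A d c ≤
      (#A ^ c : ℕ) * Real.exp (Real.log (#A)! - d * #A * Real.log b) ^ (#A ^ c) := by
  set k := #A
  have hlogb : 0 ≤ Real.log b := Real.log_nonneg (by exact_mod_cast hb)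
  have hscale : ∀ L : ℕ, (((b : ℝ) ^ L)⁻¹) ^ d = Real.exp (-(L * Real.log b * d)) := fun L => by
    rw [Real.rpow_def_of_pos (by positivity), Real.log_inv, Real.log_pow]
    ring_nf
  have hlen : ((k * k ^ c : ℕ) : ℝ) ≤ (k ^ (c + 1) + c : ℕ) := by
    rw [pow_succ']
    exact_mod_cast Nat.le_add_right _ _
  calc codeWeight b A d c
      = (k ^ c : ℕ) * (Real.exp ((k ^ c : ℕ) * Real.log k !)
          * Real.exp (-((k ^ (c + 1) + c : ℕ) * Real.log b * d))) := by
        rw [codeWeight, card_code, hscale, Real.exp_nat_mul, Real.exp_log (by positivity)]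
        push_cast
        ring
    _ ≤ (k ^ c : ℕ) * (Real.exp ((k ^ c : ℕ) * Real.log k !)
          * Real.exp (-((k * k ^ c : ℕ) * Real.log b * d))) := by
        gcongr
    _ = (k ^ c : ℕ) * Real.exp (Real.log k ! - d * k * Real.log b) ^ (k ^ c) := by
        rw [← Real.exp_add, ← Real.exp_nat_mul]
        push_cast
        ring_nf

lemma summable_codeWeight {b : ℕ} (hb : 2 ≤ b) {A : Finset ℕ} (hA : 2 ≤ #A) {d : ℝ}
    (hd : Real.log (#A)! / (#A * Real.log b) < d) : Summable (codeWeight b A d) := by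
  have hlogb : 0 < Real.log b := Real.log_pos (by exact_mod_cast hb)
  have hd0 : 0 ≤ d := le_trans (by positivity) hd.le
  set r := Real.exp (Real.log (#A)! - d * #A * Real.log b)
  have hr : ‖r‖ < 1 := by
    rw [Real.norm_of_nonneg (Real.exp_nonneg _), Real.exp_lt_one_iff, sub_neg]
    rw [div_lt_iff₀ (by positivity)] at hd
    linarith
  have hgeom := (summable_pow_mul_geometric_of_norm_lt_one 1 hr).comp_injective
    (Nat.pow_right_injective hA)
  refine hgeom.of_nonneg_of_le (fun c => by unfold codeWeight; positivity) fun c => ?_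
  simpa using codeWeight_le (by omega) A hd0 c

def codeCylinder (b : ℕ) (A : Finset ℕ) (c : ℕ) (code : Code A c) : Set ℝ :=
  baseVal b '' {ω | (∀ i, ω i ∈ A) ∧ IsCodeOf code ω}

lemma ediam_codeCylinder_le {b : ℕ} {A : Finset ℕ} (hAb : A ⊆ range b) (code : Code A c) :
    Metric.ediam (codeCylinder b A c code) ≤ ENNReal.ofReal (((b : ℝ) ^ (#A ^ (c + 1) + c))⁻¹) := by
  have hlt : ∀ {ω : ℕ → ℕ}, (∀ i, ω i ∈ A) → ∀ i, ω i < b := fun hA i => mem_range.mp (hAb (hA i))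
  refine Metric.ediam_le_of_forall_dist_le ?_
  rintro _ ⟨ω, ⟨hA, hω⟩, rfl⟩ _ ⟨ω', ⟨hA', hω'⟩, rfl⟩
  exact dist_baseVal_le (hlt hA) (hlt hA') (hω.eq_of_lt hω' hA hA')

lemma sum_ediam_codeCylinder_rpow_le {b : ℕ} {A : Finset ℕ} (hAb : A ⊆ range b) {d : ℝ}
    (hd : 0 ≤ d) (c : ℕ) :
    ∑ code : Code A c, Metric.ediam (codeCylinder b A c code) ^ d ≤
      ENNReal.ofReal (codeWeight b A d c) := by
  calc ∑ code : Code A c, Metric.ediam (codeCylinder b A c code) ^ d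
      ≤ Fintype.card (Code A c) • ENNReal.ofReal (((b : ℝ) ^ (#A ^ (c + 1) + c))⁻¹) ^ d :=
        sum_le_card_nsmul _ _ _ fun code _ => by gcongr; exact ediam_codeCylinder_le hAb code
    _ = ENNReal.ofReal (codeWeight b A d c) := by
        rw [codeWeight, ENNReal.ofReal_mul (by positivity), ENNReal.ofReal_natCast,
          ← ENNReal.ofReal_rpow_of_nonneg (by positivity) hd, nsmul_eq_mul]

lemma setOf_infinitelyDeBruijn_subset (b : ℕ) (A : Finset ℕ) (n : ℕ) :
    {x | ∃ ω : ℕ → ℕ, (∀ i, ω i ∈ A) ∧ InfinitelyDeBruijn A ω ∧ x = baseVal b ω} ⊆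
      ⋃ i : (m : ℕ) × Code A (m + n), codeCylinder b A (i.1 + n) i.2 := by
  rintro _ ⟨ω, hA, hinf, rfl⟩
  obtain ⟨M, ⟨-, hdb⟩, hnM⟩ := hinf.exists_gt n
  obtain ⟨m, rfl⟩ : ∃ m, M = m + n + 1 := ⟨M - n - 1, by omega⟩
  obtain ⟨code, hcode⟩ := dbPrefix.exists_isCodeOf hdb hA
  exact Set.mem_iUnion.mpr ⟨⟨m, code⟩, ω, ⟨hA, hcode⟩, rfl⟩

open Filter MeasureTheory Topology in
lemma hausdorffMeasure_setOf_infinitelyDeBruijn_eq_zero {b : ℕ} (hb : 2 ≤ b) {A : Finset ℕ}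
    (hAb : A ⊆ range b) (hA : 2 ≤ #A) {d : ℝ} (hd : Real.log (#A)! / (#A * Real.log b) < d) :
    μH[d] {x | ∃ ω : ℕ → ℕ, (∀ i, ω i ∈ A) ∧ InfinitelyDeBruijn A ω ∧ x = baseVal b ω} = 0 := by
  have hd0 : 0 ≤ d := le_trans (by positivity) hd.le
  have hb1 : (1 : ℝ) < b := by exact_mod_cast hb
  have hsum : ∑' c, ENNReal.ofReal (codeWeight b A d c) ≠ ⊤ := by
    rw [← ENNReal.ofReal_tsum_of_nonneg (fun c => by unfold codeWeight; positivity)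
      (summable_codeWeight hb hA hd)]
    exact ENNReal.ofReal_ne_top
  have hradius : Tendsto (fun n : ℕ => ENNReal.ofReal (((b : ℝ) ^ n)⁻¹)) atTop (𝓝 0) := by
    simpa using ENNReal.tendsto_ofReal
      (tendsto_inv_atTop_zero.comp (tendsto_pow_atTop_atTop_of_one_lt hb1))
  have hdiam : ∀ n, ∀ i : (m : ℕ) × Code A (m + n),
      Metric.ediam (codeCylinder b A (i.1 + n) i.2) ≤ ENNReal.ofReal (((b : ℝ) ^ n)⁻¹) := by
    rintro n ⟨m, code⟩
    refine (ediam_codeCylinder_le hAb code).trans (ENNReal.ofReal_le_ofReal ?_)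
    gcongr
    · exact hb1.le
    · have := Nat.one_le_two_pow.trans (Nat.pow_le_pow_left hA (m + n + 1))
      omega
  refine le_antisymm ?_ zero_le
  calc _ ≤ liminf (fun n => ∑' i : (m : ℕ) × Code A (m + n),
          Metric.ediam (codeCylinder b A (i.1 + n) i.2) ^ d) atTop :=
        Measure.hausdorffMeasure_le_liminf_tsum d _ _ hradius _ (.of_forall hdiam)
          (.of_forall (setOf_infinitelyDeBruijn_subset b A))
    _ ≤ liminf (fun n => ∑' m, ENNReal.ofReal (codeWeight b A d (m + n))) atTop := by
        refine liminf_le_liminf (.of_forall fun n => ?_)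
        rw [ENNReal.tsum_sigma']
        exact ENNReal.tsum_le_tsum fun m => by
          rw [tsum_fintype]; exact sum_ediam_codeCylinder_rpow_le hAb hd0 (m + n)
    _ = 0 := (ENNReal.tendsto_sum_nat_add _ hsum).liminf_eq

end DeBruijn

lemma Real.log_factorial_lt_mul_log {k : ℕ} (hk : 2 ≤ k) : Real.log k ! < k * Real.log k := by
  have hlt : (k ! : ℝ) < (k : ℝ) ^ k := by
    exact_mod_cast Nat.descFactorial_self k ▸ Nat.descFactorial_lt_pow (by omega) hk
  simpa [Real.log_pow] using Real.log_lt_log (by positivity) hlt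

/-- Theorem (upper bound): the set `S'` of points of `F` with at least one infinitely
de Bruijn base-`b` expansion has Hausdorff dimension at most
`log(k!)/(k log b) = (log(k!)/(k log k))·δ`, which is strictly less than `δ`. -/
theorem statement1 (b : ℕ) (hb : 2 ≤ b) (A : Finset ℕ) (hAb : A ⊆ Finset.range b)
    (k : ℕ) (hk : k = A.card) (hk2 : 2 ≤ k)
    (δ : ℝ) (hδ : δ = Real.log k / Real.log b)
    (S' : Set ℝ)
    (hS' : S' = {x : ℝ | ∃ ω : ℕ → ℕ, (∀ i, ω i ∈ A) ∧ InfinitelyDeBruijn A ω ∧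
      x = baseVal b ω}) :
    dimH S' ≤ ENNReal.ofReal (Real.log (Nat.factorial k) / (k * Real.log b)) ∧
      Real.log (Nat.factorial k) / (k * Real.log b)
        = Real.log (Nat.factorial k) / (k * Real.log k) * δ ∧
      Real.log (Nat.factorial k) / (k * Real.log b) < δ := by
  subst hk hδ hS'
  have hlogb : 0 < Real.log b := Real.log_pos (by exact_mod_cast hb)
  have hlogk : 0 < Real.log A.card := Real.log_pos (by exact_mod_cast hk2)
  refine ⟨dimH_le fun d hd => ?_, by field_simp, ?_⟩
  · by_contra hlt
    rw [not_le, ← ENNReal.ofReal_coe_nnreal, ENNReal.ofReal_lt_ofReal_iff'] at hlt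
    rw [DeBruijn.hausdorffMeasure_setOf_infinitelyDeBruijn_eq_zero hb hAb hk2 hlt.1] at hd
    exact ENNReal.zero_ne_top hd
  · rw [div_lt_div_iff₀ (by positivity) hlogb]
    nlinarith [Real.log_factorial_lt_mul_log hk2]
end

section
/- For every m ≥ 1, the number of de Bruijn sequences of order m in an alphabet A of size k ≥ 2 is at most k^{m−1} · (k!)^{k^{m−1}}. -/
/-- A word `w` of length `L` over the alphabet `A` is a (non-cyclic) de Bruijn word of
order `m`: every word of length `m` over `A` occurs exactly once as a consecutive
substring of `w`. (This is applied with `L = k^m + m - 1` where `k = #A`.) -/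
def IsDeBruijnWord {A : Type*} (m L : ℕ) (w : Fin L → A) : Prop :=
  ∀ v : Fin m → A, ∃! j : ℕ,
    j + m ≤ L ∧ ∀ (i : Fin m) (h : j + (i : ℕ) < L), w ⟨j + (i : ℕ), h⟩ = v i

namespace DBAux

variable {A : Type*}

/-- de Bruijn property for `ℕ`-indexed words, order `n+1`. -/
def DBW (n L : ℕ) (W : ℕ → A) : Prop :=
  ∀ v : Fin (n+1) → A, ∃! j : ℕ, j + (n+1) ≤ L ∧ ∀ i : Fin (n+1), W (j + (i : ℕ)) = v i

variable {n L : ℕ} {W W' : ℕ → A}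

noncomputable def occ (hW : DBW n L W) (v : Fin (n+1) → A) : ℕ := (hW v).choose

lemma occ_le (hW : DBW n L W) (v : Fin (n+1) → A) : occ hW v + (n+1) ≤ L :=
  (hW v).choose_spec.1.1

lemma occ_win (hW : DBW n L W) (v : Fin (n+1) → A) (i : Fin (n+1)) :
    W (occ hW v + (i : ℕ)) = v i :=
  (hW v).choose_spec.1.2 i

lemma occ_unique (hW : DBW n L W) {v : Fin (n+1) → A} {j : ℕ}
    (h1 : j + (n+1) ≤ L) (h2 : ∀ i : Fin (n+1), W (j + (i : ℕ)) = v i) :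
    occ hW v = j :=
  ((hW v).choose_spec.2 j ⟨h1, h2⟩).symm

lemma occ_injective (hW : DBW n L W) {v v' : Fin (n+1) → A}
    (h : occ hW v = occ hW v') : v = v' := by
  funext i
  rw [← occ_win hW v i, ← occ_win hW v' i, h]

variable [Fintype A] [DecidableEq A]

/-- The rank of letter `a` after the `(m-1)`-word `u`. -/
noncomputable def rk (hW : DBW n L W) (u : Fin n → A) (a : A) : ℕ :=
  (Finset.univ.filter fun b =>
    occ hW (Fin.snoc u b) < occ hW (Fin.snoc u a)).card

lemma rk_lt_card (hW : DBW n L W) (u : Fin n → A) (a : A) :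
    rk hW u a < Fintype.card A := by
  rw [← Finset.card_univ]
  refine Finset.card_lt_card ((Finset.ssubset_iff_of_subset (Finset.filter_subset _ _)).2
    ⟨a, Finset.mem_univ a, ?_⟩)
  simp

lemma rk_lt_rk (hW : DBW n L W) {u : Fin n → A} {a b : A}
    (h : occ hW (Fin.snoc u a) < occ hW (Fin.snoc u b)) :
    rk hW u a < rk hW u b := by
  refine Finset.card_lt_card ((Finset.ssubset_iff_of_subset ?_).2
    ⟨a, ?_, ?_⟩)
  · intro c hc
    rw [Finset.mem_filter] at hc ⊢
    exact ⟨hc.1, lt_trans hc.2 h⟩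
  · simpa using h
  · simp

lemma rk_injective (hW : DBW n L W) (u : Fin n → A) {a b : A}
    (h : rk hW u a = rk hW u b) : a = b := by
  by_contra hne
  have hocc : occ hW (Fin.snoc u a) ≠ occ hW (Fin.snoc u b) := by
    intro he
    apply hne
    have := occ_injective hW he
    have := congrFun this (Fin.last n)
    simpa using this
  rcases lt_or_gt_of_ne hocc with hlt | hlt
  · exact absurd h (Nat.ne_of_lt (rk_lt_rk hW hlt))
  · exact absurd h.symm (Nat.ne_of_lt (rk_lt_rk hW hlt))

/-- positions `< t` where the `(m-1)`-word `u` occurs (as a prefix of a full window). -/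
def prefOcc (W : ℕ → A) (u : Fin n → A) (t L : ℕ) : Finset ℕ :=
  (Finset.range t).filter fun s => s + (n+1) ≤ L ∧ ∀ i : Fin n, W (s + (i : ℕ)) = u i

lemma rk_eq_card (hW : DBW n L W) (u : Fin n → A) (a : A) :
    rk hW u a = (prefOcc W u (occ hW (Fin.snoc u a)) L).card := by
  refine Finset.card_bij (fun b _ => occ hW (Fin.snoc u b)) ?_ ?_ ?_
  · intro b hb
    rw [Finset.mem_filter] at hb
    rw [prefOcc, Finset.mem_filter, Finset.mem_range]
    refine ⟨hb.2, occ_le hW _, fun i => ?_⟩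
    have := occ_win hW (Fin.snoc u b) i.castSucc
    simpa using this
  · intro b hb b' hb' he
    have := occ_injective hW he
    have := congrFun this (Fin.last n)
    simpa using this
  · intro s hs
    rw [prefOcc, Finset.mem_filter, Finset.mem_range] at hs
    refine ⟨W (s + n), ?_, ?_⟩
    · rw [Finset.mem_filter]
      refine ⟨Finset.mem_univ _, ?_⟩
      rw [occ_unique hW hs.2.1 ?_]
      · exact hs.1
      · intro i
        refine Fin.lastCases ?_ ?_ i
        · simp
        · intro j
          simpa using hs.2.2 j
    · refine occ_unique hW hs.2.1 ?_
      intro i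
      refine Fin.lastCases ?_ ?_ i
      · simp
      · intro j
        simpa using hs.2.2 j

lemma reconstruct (hW : DBW n L W) (hW' : DBW n L W')
    (hpre : ∀ p < n, W p = W' p)
    (hrk : ∀ u a, rk hW u a = rk hW' u a) :
    ∀ q < L, W q = W' q := by
  intro q
  induction q using Nat.strong_induction_on with
  | _ q IH =>
    intro hq
    by_cases hq' : q < n
    · exact hpre q hq'
    push_neg at hq'
    set t := q - n with ht_def
    have hqt : q = t + n := by omega
    have ht : t + (n+1) ≤ L := by omega
    set u : Fin n → A := fun i => W (t + (i : ℕ)) with hu_def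
    have hu' : ∀ i : Fin n, W' (t + (i : ℕ)) = u i := by
      intro i
      have hi : (i : ℕ) < n := i.isLt
      exact (IH (t + i) (by omega) (by omega)).symm
    have h1 : occ hW (Fin.snoc u (W q)) = t := by
      refine occ_unique hW ht ?_
      intro i
      refine Fin.lastCases ?_ ?_ i
      · simp [hqt]
      · intro j; simp [hu_def]
    have h2 : occ hW' (Fin.snoc u (W' q)) = t := by
      refine occ_unique hW' ht ?_
      intro i
      refine Fin.lastCases ?_ ?_ i
      · simp [hqt]
      · intro j; simpa using hu' j
    have hS : prefOcc W u t L = prefOcc W' u t L := by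
      unfold prefOcc
      refine Finset.filter_congr ?_
      intro s hs
      rw [Finset.mem_range] at hs
      have hWW : ∀ i : Fin n, W (s + (i : ℕ)) = W' (s + (i : ℕ)) := by
        intro i
        have hi : (i : ℕ) < n := i.isLt
        exact IH (s + i) (by omega) (by omega)
      constructor
      · rintro ⟨hle, hall⟩
        exact ⟨hle, fun i => (hWW i).symm.trans (hall i)⟩
      · rintro ⟨hle, hall⟩
        exact ⟨hle, fun i => (hWW i).trans (hall i)⟩
    have e1 : rk hW u (W q) = (prefOcc W u t L).card := by
      rw [rk_eq_card hW u (W q), h1]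
    have e2 : rk hW' u (W' q) = (prefOcc W' u t L).card := by
      rw [rk_eq_card hW' u (W' q), h2]
    have : rk hW u (W q) = rk hW u (W' q) := by
      rw [e1, hS, ← e2, hrk u (W' q)]
    exact rk_injective hW u this

/-- Extend a `Fin L`-indexed word to all of `ℕ`. -/
def toW (a0 : A) {L : ℕ} (w : Fin L → A) : ℕ → A :=
  fun p => if h : p < L then w ⟨p, h⟩ else a0

lemma toW_db (a0 : A) {w : Fin L → A} (hw : IsDeBruijnWord (n+1) L w) :
    DBW n L (toW a0 w) := by
  intro v
  refine (existsUnique_congr fun j => ?_).2 (hw v)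
  constructor
  · rintro ⟨hle, hall⟩
    refine ⟨hle, fun i h => ?_⟩
    have := hall i
    rwa [toW, dif_pos h] at this
  · rintro ⟨hle, hall⟩
    refine ⟨hle, fun i => ?_⟩
    have h : j + (i : ℕ) < L := by
      have := i.isLt; omega
    rw [toW, dif_pos h]
    exact hall i h

end DBAux

/-- The number of de Bruijn sequences of order `m ≥ 1` in an alphabet of size `k ≥ 2`
is at most `k^(m-1) · (k!)^(k^(m-1))`. -/
theorem statement4 (A : Type*) [Fintype A] (k : ℕ) (hk : k = Fintype.card A)
    (hk2 : 2 ≤ k) (m : ℕ) (hm : 1 ≤ m) :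
    Nat.card {w : Fin (k ^ m + m - 1) → A // IsDeBruijnWord m (k ^ m + m - 1) w} ≤
      k ^ (m - 1) * Nat.factorial k ^ k ^ (m - 1) := by
  classical
  obtain _ | n := m
  · omega
  have hA : Nonempty A := Fintype.card_pos_iff.mp (by omega)
  obtain ⟨a0⟩ := hA
  set L := k ^ (n+1) + (n+1) - 1 with hL
  -- the encoding
  set F : {w : Fin L → A // IsDeBruijnWord (n+1) L w} →
      (Fin n → A) × ((Fin n → A) → (A ↪ Fin (Fintype.card A))) :=
    fun w =>
      (fun i : Fin n => DBAux.toW a0 w.1 (i : ℕ),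
       fun u => ⟨fun a => ⟨DBAux.rk (DBAux.toW_db a0 w.2) u a,
          DBAux.rk_lt_card (DBAux.toW_db a0 w.2) u a⟩,
        fun a b h => DBAux.rk_injective (DBAux.toW_db a0 w.2) u
          (congrArg Fin.val h)⟩) with hF
  have hFinj : Function.Injective F := by
    rintro ⟨w, hw⟩ ⟨w', hw'⟩ h
    rw [hF, Prod.mk.injEq] at h
    obtain ⟨h1, h2⟩ := h
    have hpre : ∀ p < n, DBAux.toW a0 w p = DBAux.toW a0 w' p := by
      intro p hp
      exact congrFun h1 ⟨p, hp⟩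
    have hrk : ∀ u a, DBAux.rk (DBAux.toW_db a0 hw) u a
        = DBAux.rk (DBAux.toW_db a0 hw') u a := by
      intro u a
      have := congrFun h2 u
      have := DFunLike.congr_fun this a
      exact congrArg Fin.val this
    have hrec := DBAux.reconstruct (DBAux.toW_db a0 hw) (DBAux.toW_db a0 hw') hpre hrk
    refine Subtype.ext ?_
    funext p
    have := hrec p p.isLt
    rw [DBAux.toW, DBAux.toW, dif_pos p.isLt, dif_pos p.isLt] at this
    simpa using this
  have hcard : Nat.card {w : Fin L → A // IsDeBruijnWord (n+1) L w} ≤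
      Nat.card ((Fin n → A) × ((Fin n → A) → (A ↪ Fin (Fintype.card A)))) :=
    Nat.card_le_card_of_injective F hFinj
  have hTcard : Nat.card ((Fin n → A) × ((Fin n → A) → (A ↪ Fin (Fintype.card A))))
      = k ^ n * Nat.factorial k ^ k ^ n := by
    rw [Nat.card_eq_fintype_card, Fintype.card_prod, Fintype.card_fun,
      Fintype.card_fun, Fintype.card_embedding_eq, Fintype.card_fin,
      Fintype.card_fin, ← hk, Nat.descFactorial_self, Fintype.card_fun, Fintype.card_fin, ← hk]
  rw [hTcard] at hcard
  simpa using hcard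
end

section
/- (BEST theorem, path-counting version.) Let X be a finite directed graph in which every vertex has nonzero in-degree equal to its out-degree, fix a vertex x₀, let 𝓔 be the set of Eulerian paths of X that start and end at x₀ (two Eulerian paths being counted as different whenever they differ as sequences of vertices, even if cyclically equivalent), and let 𝓣 be the set of directed spanning trees of X rooted at x₀ with all edges directed toward x₀. Then #𝓔 = #𝓣 · deg(x₀) · ∏_{x ∈ V(X)} (deg(x) − 1)!, where deg(x) denotes the common in/out-degree of x. -/
/-!
For an Eulerian circuit from `x₀`, record at every vertex `x` the order in which the circuit
leaves `x` along its out-edges. These exit orders determine the circuit, and the last exits from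
the vertices `x ≠ x₀` form a spanning tree directed toward `x₀`. Conversely, every choice of
orders whose last exits form such a tree comes from a circuit: the longest trail from `x₀`
obeying the orders has used all exits at its end, which by degree balance must be `x₀`; and an
exit left unused at some vertex would, following the tree, leave one unused at `x₀`. For a fixed
tree, the orders with the prescribed last exits number `deg x₀! · ∏_{x ≠ x₀} (deg x - 1)!`.
-/

/-- `l` is an Eulerian path from `x₀` to `x₁` in the directed graph with adjacency
relation `adj`: it starts at `x₀`, ends at `x₁`, and its consecutive pairs are pairwise
distinct and are exactly the edges of the graph (each edge traversed exactly once).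
Two Eulerian paths are distinct whenever they differ as sequences of vertices. -/
def IsEulerianFromTo {V : Type*} (adj : V → V → Prop) (x₀ x₁ : V) (l : List V) : Prop :=
  l.head? = some x₀ ∧ l.getLast? = some x₁ ∧
    (l.zip l.tail).Nodup ∧ ∀ p : V × V, p ∈ l.zip l.tail ↔ adj p.1 p.2

/-- `T` (a set of directed edges of the graph `adj`) is a directed spanning tree rooted
at `x₀` with all edges directed toward `x₀`: every vertex other than `x₀` has exactly
one outgoing edge in `T`, `x₀` has none, and from every vertex there is a directed path
in `T` to `x₀`. -/
def IsSpanningTreeTo {V : Type*} (adj : V → V → Prop) (x₀ : V) (T : Set (V × V)) : Prop :=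
  (∀ p ∈ T, adj p.1 p.2) ∧
    (∀ x : V, x ≠ x₀ → ∃! y : V, (x, y) ∈ T) ∧
    (∀ y : V, (x₀, y) ∉ T) ∧
    ∀ x : V, Relation.ReflTransGen (fun a c => (a, c) ∈ T) x x₀

namespace BEST

section Lists

variable {α : Type*}

def steps (l : List α) : List (α × α) := l.zip l.tail

@[simp] lemma steps_nil : steps ([] : List α) = [] := rfl

@[simp] lemma steps_singleton (a : α) : steps [a] = [] := rfl

@[simp] lemma steps_cons_cons (a b : α) (t : List α) :
    steps (a :: b :: t) = (a, b) :: steps (b :: t) := rfl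

lemma mem_of_mem_steps {l : List α} {a b : α} (h : (a, b) ∈ steps l) : a ∈ l ∧ b ∈ l :=
  ⟨(List.of_mem_zip h).1, List.mem_of_mem_tail (List.of_mem_zip h).2⟩

lemma length_le_length_steps_add_one (l : List α) : l.length ≤ (steps l).length + 1 := by
  simp only [steps, List.length_zip, List.length_tail]
  omega

lemma map_fst_steps : ∀ l : List α, (steps l).map Prod.fst = l.dropLast
  | [] | [_] => rfl
  | a :: b :: t => by rw [steps_cons_cons, List.map_cons, map_fst_steps (b :: t)]; rfl

lemma map_snd_steps (l : List α) : (steps l).map Prod.snd = l.tail :=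
  List.map_snd_zip (by simp)

lemma steps_append_singleton : ∀ (l : List α) (h : l ≠ []) (y : α),
    steps (l ++ [y]) = steps l ++ [(l.getLast h, y)]
  | [a], _, y => rfl
  | a :: b :: t, _, y => by
    rw [List.cons_append, List.cons_append, steps_cons_cons, ← List.cons_append,
      steps_append_singleton (b :: t) (List.cons_ne_nil _ _) y]
    simp

lemma not_mem_of_getLast?_eq_of_prefix {m l : List α} (hp : m <+: l) (hne : m ≠ l)
    (hl : l.Nodup) {c : α} (hc : l.getLast? = some c) : c ∉ m := by
  obtain ⟨r, rfl⟩ := hp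
  have hr : r ≠ [] := by rintro rfl; simp at hne
  rw [List.getLast?_append_of_ne_nil _ hr] at hc
  exact fun hcm => (List.nodup_append.mp hl).2.2 c hcm c (List.mem_of_getLast? hc) rfl

variable [DecidableEq α]

def exits (x : α) (l : List α) : List α :=
  ((steps l).filter (·.1 = x)).map Prod.snd

def entries (v : α) (l : List α) : List α :=
  ((steps l).filter (·.2 = v)).map Prod.fst

lemma mem_exits {x b : α} {l : List α} : b ∈ exits x l ↔ (x, b) ∈ steps l := by
  simp [exits]

lemma mem_entries {v a : α} {l : List α} : a ∈ entries v l ↔ (a, v) ∈ steps l := by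
  simp [entries]

lemma nodup_exits {l : List α} (h : (steps l).Nodup) (x : α) : (exits x l).Nodup :=
  (h.filter _).map_on fun p hp q hq hpq => by
    simp only [List.mem_filter, decide_eq_true_eq] at hp hq
    exact Prod.ext (hp.2.trans hq.2.symm) hpq

lemma nodup_entries {l : List α} (h : (steps l).Nodup) (v : α) : (entries v l).Nodup :=
  (h.filter _).map_on fun p hp q hq hpq => by
    simp only [List.mem_filter, decide_eq_true_eq] at hp hq
    exact Prod.ext hpq (hp.2.trans hq.2.symm)

lemma exits_cons_cons (x a b : α) (t : List α) :
    exits x (a :: b :: t) = if a = x then b :: exits x (b :: t) else exits x (b :: t) := by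
  simp only [exits, steps_cons_cons, List.filter_cons, decide_eq_true_eq]
  split <;> rfl

lemma exits_eq_nil_of_not_mem {x : α} {l : List α} (h : x ∉ l) : exits x l = [] :=
  List.eq_nil_iff_forall_not_mem.mpr fun _ hb => h (mem_of_mem_steps (mem_exits.mp hb)).1

lemma exits_append_singleton (x : α) (l : List α) (h : l ≠ []) (y : α) :
    exits x (l ++ [y]) = exits x l ++ (if l.getLast h = x then [y] else []) := by
  simp only [exits, steps_append_singleton l h y, List.filter_append, List.map_append]
  split <;> simp_all

lemma length_exits (x : α) (l : List α) : (exits x l).length = l.dropLast.count x := by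
  rw [exits, List.length_map, ← List.countP_eq_length_filter, ← map_fst_steps,
    List.count, List.countP_map]
  rfl

lemma length_entries (v : α) (l : List α) : (entries v l).length = l.tail.count v := by
  rw [entries, List.length_map, ← List.countP_eq_length_filter, ← map_snd_steps,
    List.count, List.countP_map]
  rfl

/-- Flow conservation along a walk: each visit of `v` is entered and left, except at the ends. -/
lemma length_exits_add_ite (l : List α) (h : l ≠ []) (v : α) :
    (exits v l).length + (if l.getLast h = v then 1 else 0) =
      (if l.head h = v then 1 else 0) + (entries v l).length := by
  have hlast := congrArg (List.count v) (List.dropLast_append_getLast h)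
  have hhead := congrArg (List.count v) (List.cons_head_tail h)
  rw [List.count_append, List.count_singleton] at hlast
  rw [List.count_cons] at hhead
  rw [length_exits, length_entries]
  simp only [beq_iff_eq] at hlast hhead
  omega

lemma getLast?_exits_of_suffix {a b : α} {s : List α} (ha : a ∉ b :: s) :
    ∀ {l : List α}, (a :: b :: s) <:+ l → (exits a l).getLast? = some b
  | [], h => by simpa using h.length_le
  | c :: l, h => by
    rcases List.suffix_cons_iff.mp h with h | h
    · obtain ⟨rfl, rfl⟩ := List.cons_eq_cons.mp h.symm
      rw [exits_cons_cons, if_pos rfl, exits_eq_nil_of_not_mem ha]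
      rfl
    · have hl := getLast?_exits_of_suffix ha h
      obtain ⟨d, l, rfl⟩ : ∃ d l', l = d :: l' := List.exists_cons_of_ne_nil (by
        rintro rfl; simp [exits] at hl)
      rw [exits_cons_cons]
      split
      · rw [List.getLast?_cons, hl]; rfl
      · exact hl

lemma eq_of_head?_eq_of_exits_eq :
    ∀ {l l' : List α}, l.head? = l'.head? → (∀ x, exits x l = exits x l') → l = l'
  | [], l', h, _ => by cases l' <;> simp_all
  | _ :: _, [], h, _ => by simp at h
  | [a], [_], h, _ => by simpa using h
  | [a], _ :: b' :: _, h, hs => by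
    obtain rfl : a = _ := by simpa using h
    simpa [exits] using hs a
  | a :: b :: _, [_], h, hs => by
    obtain rfl : a = _ := by simpa using h
    simpa [exits] using hs a
  | a :: b :: t, a' :: b' :: t', h, hs => by
    obtain rfl : a = a' := by simpa using h
    have hb := hs a
    rw [exits_cons_cons, exits_cons_cons, if_pos rfl, if_pos rfl, List.cons_eq_cons] at hb
    obtain ⟨rfl, hba⟩ := hb
    refine congrArg (a :: ·) (eq_of_head?_eq_of_exits_eq rfl fun x => ?_)
    by_cases hx : a = x
    · exact hx ▸ hba
    · simpa [exits_cons_cons, hx] using hs x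

end Lists

section Enumerations

variable {α : Type*} (p : α → Prop)

def IsEnumeration (m : List α) : Prop := m.Nodup ∧ ∀ y, y ∈ m ↔ p y

variable {p} [Finite α]

lemma length_le_natCard_of_nodup {l : List α} (hl : l.Nodup) (h : ∀ y ∈ l, p y) :
    l.length ≤ Nat.card {y // p y} := by
  classical
  have := Fintype.ofFinite α
  rw [← List.toFinset_card_of_nodup hl, Nat.card_eq_fintype_card, Fintype.card_subtype]
  exact Finset.card_le_card fun y hy => by simpa using h y (List.mem_toFinset.mp hy)

lemma length_lt_natCard_of_nodup {l : List α} (hl : l.Nodup) (h : ∀ y ∈ l, p y) {b : α}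
    (hb : p b) (hbl : b ∉ l) : l.length < Nat.card {y // p y} :=
  length_le_natCard_of_nodup (List.nodup_cons.mpr ⟨hbl, hl⟩) (by simpa [hb] using h)

lemma IsEnumeration.length_eq_natCard {m : List α} (hm : IsEnumeration p m) :
    m.length = Nat.card {y // p y} := by
  classical
  have := Fintype.ofFinite α
  rw [← List.toFinset_card_of_nodup hm.1, Nat.card_eq_fintype_card, Fintype.card_subtype]
  congr 1
  ext y
  simp [hm.2 y]

variable (p)

lemma natCard_isEnumeration :
    Nat.card {m // IsEnumeration p m} = (Nat.card {y // p y}).factorial := by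
  classical
  have := Fintype.ofFinite α
  set l₀ := (Finset.univ.filter p).toList
  have hl₀ : IsEnumeration p l₀ := ⟨Finset.nodup_toList _, by simp [l₀]⟩
  have e : ∀ m, IsEnumeration p m ↔ m ∈ l₀.permutations.toFinset := fun m => by
    rw [List.mem_toFinset, List.mem_permutations]
    refine ⟨fun hm => (List.perm_ext_iff_of_nodup hm.1 hl₀.1).mpr fun y => ?_, fun hm => ?_⟩
    · exact (hm.2 y).trans (hl₀.2 y).symm
    · exact ⟨hm.nodup_iff.mpr hl₀.1, fun y => hm.mem_iff.trans (hl₀.2 y)⟩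
  rw [Nat.card_congr (Equiv.subtypeEquivRight e), Nat.card_eq_fintype_card, Fintype.card_coe,
    List.toFinset_card_of_nodup (List.nodup_permutations _ hl₀.1), List.length_permutations,
    hl₀.length_eq_natCard]

lemma natCard_isEnumeration_getLast {a : α} (ha : p a) :
    Nat.card {m // IsEnumeration p m ∧ m.getLast? = some a} =
      (Nat.card {y // p y} - 1).factorial := by
  let q y := p y ∧ y ≠ a
  have hq : Nat.card {y // q y} = Nat.card {y // p y} - 1 := by
    classical
    have := Fintype.ofFinite α
    simp only [Nat.card_eq_fintype_card, Fintype.card_subtype, q]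
    rw [← Finset.card_erase_of_mem (by simpa using ha : a ∈ Finset.univ.filter p)]
    congr 1
    ext y
    simp [and_comm]
  have append_mem (t : {t // IsEnumeration q t}) :
      IsEnumeration p (t.1 ++ [a]) ∧ (t.1 ++ [a]).getLast? = some a := by
    refine ⟨⟨List.nodup_append.mpr ⟨t.2.1, List.nodup_singleton a, ?_⟩, fun y => ?_⟩, by simp⟩
    · simpa using fun y hy => ((t.2.2 y).mp hy).2
    · by_cases hy : y = a <;> simp [hy, ha, t.2.2 y, q]
  rw [← hq, ← natCard_isEnumeration q]
  refine (Nat.card_congr (Equiv.ofBijective (fun t => ⟨t.1 ++ [a], append_mem t⟩) ⟨?_, ?_⟩)).symm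
  · intro t t' h
    exact Subtype.ext (by simpa using congrArg Subtype.val h)
  · rintro ⟨m, hm, hlast⟩
    obtain ⟨t, rfl⟩ := List.getLast?_eq_some_iff.mp hlast
    have ht := List.nodup_append.mp hm.1
    refine ⟨⟨t, ht.1, fun y => ⟨fun hy => ⟨(hm.2 y).mp (by simp [hy]), ?_⟩, fun hy => ?_⟩⟩, rfl⟩
    · exact ht.2.2 y hy a (by simp)
    · simpa [hy.2] using (hm.2 y).mpr hy.1

end Enumerations

section ExitOrderings

variable {V : Type*} {adj : V → V → Prop} {x₀ : V}

def lastExitEdges (x₀ : V) (σ : V → List V) : Set (V × V) :=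
  {p | p.1 ≠ x₀ ∧ (σ p.1).getLast? = some p.2}

def IsExitOrdering (adj : V → V → Prop) (x₀ : V) (σ : V → List V) : Prop :=
  (∀ x, IsEnumeration (adj x) (σ x)) ∧ IsSpanningTreeTo adj x₀ (lastExitEdges x₀ σ)

variable [DecidableEq V]

/-- The last exit from a vertex `x ≠ x₀` of a walk ending at `x₀` leads to a vertex visited
after the last visit of `x`. -/
lemma reflTransGen_lastExitEdges {l : List V} (hl : l.getLast? = some x₀) :
    ∀ {s : List V}, s <:+ l → ∀ x ∈ s,
      Relation.ReflTransGen (fun a c => (a, c) ∈ lastExitEdges x₀ (exits · l)) x x₀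
  | [], _, x, hx => by simp at hx
  | a :: s, hs, x, hx => by
    have ih := reflTransGen_lastExitEdges hl ((List.suffix_cons a s).trans hs)
    rcases List.mem_cons.mp hx with rfl | hx
    · by_cases hax : x = x₀
      · exact hax ▸ .refl
      cases s with
      | nil =>
        obtain ⟨t, rfl⟩ := hs
        simp only [List.getLast?_append, List.getLast?_singleton, Option.some_or,
          Option.some.injEq] at hl
        exact absurd hl hax
      | cons b s =>
        by_cases hxs : x ∈ b :: s
        · exact ih x hxs
        · exact .head ⟨hax, getLast?_exits_of_suffix hxs hs⟩ (ih b (by simp))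
    · exact ih x hx

theorem isExitOrdering_exits (hdeg : ∀ x, ∃ y, adj x y) {l : List V}
    (hl : IsEulerianFromTo adj x₀ x₀ l) : IsExitOrdering adj x₀ (exits · l) := by
  obtain ⟨-, hlast, hnodup, hmem⟩ := hl
  have henum : ∀ x, IsEnumeration (adj x) (exits x l) := fun x =>
    ⟨nodup_exits hnodup x, fun y => mem_exits.trans (hmem (x, y))⟩
  refine ⟨henum, fun p hp => ((henum p.1).2 p.2).mp (List.mem_of_getLast? hp.2), fun x hx => ?_,
    fun y hy => hy.1 rfl, fun x => ?_⟩
  · obtain ⟨y, hy⟩ := hdeg x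
    have hne : exits x l ≠ [] := List.ne_nil_of_mem (((henum x).2 y).mpr hy)
    refine ⟨(exits x l).getLast hne, ⟨hx, List.getLast?_eq_some_getLast hne⟩, fun y hy => ?_⟩
    simpa [List.getLast?_eq_some_getLast hne] using hy.2.symm
  · obtain ⟨y, hy⟩ := hdeg x
    exact reflTransGen_lastExitEdges hlast (List.suffix_refl l) x
      (mem_of_mem_steps ((hmem (x, y)).mpr hy)).1

def IsPartialTour (x₀ : V) (σ : V → List V) (l : List V) : Prop :=
  l.head? = some x₀ ∧ (steps l).Nodup ∧ ∀ x, exits x l <+: σ x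

lemma exists_longest_isPartialTour [Finite V] (x₀ : V) (σ : V → List V) :
    ∃ l, IsPartialTour x₀ σ l ∧ ∀ l', IsPartialTour x₀ σ l' → l'.length ≤ l.length := by
  have := Fintype.ofFinite V
  have hfin : {l | IsPartialTour x₀ σ l}.Finite :=
    (List.finite_length_le V (Fintype.card (V × V) + 1)).subset fun l hl =>
      (length_le_length_steps_add_one l).trans (Nat.add_le_add_right hl.2.1.length_le_card 1)
  exact Set.exists_max_image _ List.length hfin ⟨[x₀], rfl, by simp, fun x => by simp [exits]⟩

namespace IsPartialTour

variable {σ : V → List V} {l : List V}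

lemma ne_nil (hl : IsPartialTour x₀ σ l) : l ≠ [] := by
  rintro rfl
  simpa using hl.1

lemma adj_of_mem_steps (hσ : ∀ x, IsEnumeration (adj x) (σ x)) (hl : IsPartialTour x₀ σ l)
    {a b : V} (h : (a, b) ∈ steps l) : adj a b :=
  ((hσ a).2 b).mp ((hl.2.2 a).subset (mem_exits.mpr h))

lemma exits_getLast_eq_of_longest (hσ : ∀ x, (σ x).Nodup) (hl : IsPartialTour x₀ σ l)
    (hmax : ∀ l', IsPartialTour x₀ σ l' → l'.length ≤ l.length) :
    exits (l.getLast hl.ne_nil) l = σ (l.getLast hl.ne_nil) := by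
  set z := l.getLast hl.ne_nil
  obtain ⟨r, hr⟩ := hl.2.2 z
  cases r with
  | nil => simpa using hr
  | cons y r =>
    have hy : (z, y) ∉ steps l := fun h => by
      have := hσ z
      rw [← hr, List.nodup_append] at this
      exact this.2.2 y (mem_exits.mpr h) y (by simp) rfl
    have hext : IsPartialTour x₀ σ (l ++ [y]) := by
      refine ⟨by rw [List.head?_append_of_ne_nil _ hl.ne_nil]; exact hl.1, ?_, fun x => ?_⟩
      · rw [steps_append_singleton l hl.ne_nil, List.nodup_append]
        refine ⟨hl.2.1, List.nodup_singleton _, fun p hp q hq hpq => hy ?_⟩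
        rwa [hpq, List.mem_singleton.mp hq] at hp
      · rw [exits_append_singleton x l hl.ne_nil]
        split_ifs with hx
        · subst hx
          exact ⟨r, by simp [z, ← hr]⟩
        · simpa using hl.2.2 x
    simpa using hmax _ hext

lemma head_eq (hl : IsPartialTour x₀ σ l) : l.head hl.ne_nil = x₀ := by
  simpa [List.head?_eq_some_head hl.ne_nil] using hl.1

lemma getLast_eq_of_exits_getLast_eq [Finite V] (hσ : ∀ x, IsEnumeration (adj x) (σ x))
    (hbal : ∀ x, Nat.card {y // adj x y} = Nat.card {y // adj y x}) (hl : IsPartialTour x₀ σ l)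
    (hz : exits (l.getLast hl.ne_nil) l = σ (l.getLast hl.ne_nil)) :
    l.getLast hl.ne_nil = x₀ := by
  set z := l.getLast hl.ne_nil
  by_contra hzx
  have hflow := length_exits_add_ite l hl.ne_nil z
  rw [if_pos rfl, hl.head_eq, if_neg (Ne.symm hzx), hz, (hσ z).length_eq_natCard, hbal] at hflow
  have := length_le_natCard_of_nodup (nodup_entries hl.2.1 z) fun a ha =>
    hl.adj_of_mem_steps hσ (mem_entries.mp ha)
  omega

lemma exits_eq_of_getLast_eq [Finite V] (hσ : IsExitOrdering adj x₀ σ)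
    (hbal : ∀ x, Nat.card {y // adj x y} = Nat.card {y // adj y x}) (hl : IsPartialTour x₀ σ l)
    (hlast : l.getLast hl.ne_nil = x₀) (hx₀ : exits x₀ l = σ x₀) (v : V) : exits v l = σ v := by
  have hflow (c : V) : (exits c l).length = (entries c l).length := by
    have := length_exits_add_ite l hl.ne_nil c
    rw [hlast, hl.head_eq] at this
    omega
  obtain ⟨henum, htree_adj, -, -, hreach⟩ := hσ
  -- an unused last exit `(a, c)` leaves an entry into `c` unused, so by balance also an exit
  have hpropagate (a c : V) (hac : (a, c) ∈ lastExitEdges x₀ σ) (ha : exits a l ≠ σ a) :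
      exits c l ≠ σ c := fun hc => by
    have hunused : a ∉ entries c l := fun h =>
      not_mem_of_getLast?_eq_of_prefix (hl.2.2 a) ha (henum a).1 hac.2
        (mem_exits.mpr (mem_entries.mp h))
    have hlt := length_lt_natCard_of_nodup (nodup_entries hl.2.1 c)
      (fun b hb => hl.adj_of_mem_steps henum (mem_entries.mp hb)) (htree_adj _ hac) hunused
    have hlen := congrArg List.length hc
    rw [hflow, (henum c).length_eq_natCard, hbal] at hlen
    omega
  by_contra hv
  induction hreach v using Relation.ReflTransGen.head_induction_on with
  | refl => exact hv hx₀
  | head hac _ ih => exact ih (hpropagate _ _ hac hv)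

end IsPartialTour

theorem exists_isEulerianFromTo_exits_eq [Finite V]
    (hbal : ∀ x, Nat.card {y // adj x y} = Nat.card {y // adj y x}) {σ : V → List V}
    (hσ : IsExitOrdering adj x₀ σ) : ∃ l, IsEulerianFromTo adj x₀ x₀ l ∧ ∀ x, exits x l = σ x := by
  obtain ⟨l, hl, hmax⟩ := exists_longest_isPartialTour x₀ σ
  have hz := hl.exits_getLast_eq_of_longest (fun x => (hσ.1 x).1) hmax
  have hlast := hl.getLast_eq_of_exits_getLast_eq hσ.1 hbal hz
  have hexits := hl.exits_eq_of_getLast_eq hσ hbal hlast (hlast ▸ hz)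
  refine ⟨l, ⟨hl.1, ?_, hl.2.1, fun p => ?_⟩, hexits⟩
  · rw [List.getLast?_eq_some_getLast hl.ne_nil, hlast]
  · change p ∈ steps l ↔ _
    rw [← mem_exits, hexits]
    exact (hσ.1 p.1).2 p.2

end ExitOrderings

section Counting

variable {V : Type*} {adj : V → V → Prop} {x₀ : V} {T : Set (V × V)}

def IsLastExitCompatible (adj : V → V → Prop) (x₀ : V) (T : Set (V × V)) (x : V)
    (m : List V) : Prop :=
  IsEnumeration (adj x) m ∧ (x ≠ x₀ → ∀ y, m.getLast? = some y ↔ (x, y) ∈ T)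

lemma isExitOrdering_and_lastExitEdges_eq_iff (hT : IsSpanningTreeTo adj x₀ T)
    (σ : V → List V) :
    IsExitOrdering adj x₀ σ ∧ lastExitEdges x₀ σ = T ↔
      ∀ x, IsLastExitCompatible adj x₀ T x (σ x) := by
  constructor
  · rintro ⟨hσ, rfl⟩ x
    exact ⟨hσ.1 x, fun hx y => ⟨fun h => ⟨hx, h⟩, And.right⟩⟩
  · intro hσ
    have hlast : lastExitEdges x₀ σ = T := by
      ext ⟨a, b⟩
      refine ⟨fun h => ((hσ a).2 h.1 b).mp h.2, fun h => ?_⟩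
      have ha : a ≠ x₀ := by
        rintro rfl
        exact hT.2.2.1 b h
      exact ⟨ha, ((hσ a).2 ha b).mpr h⟩
    exact ⟨⟨fun x => (hσ x).1, hlast ▸ hT⟩, hlast⟩

lemma natCard_isLastExitCompatible [Finite V] [DecidableEq V] (hT : IsSpanningTreeTo adj x₀ T)
    (x : V) :
    Nat.card {m // IsLastExitCompatible adj x₀ T x m} =
      if x = x₀ then (Nat.card {y // adj x y}).factorial
      else (Nat.card {y // adj x y} - 1).factorial := by
  split_ifs with hx
  · rw [← natCard_isEnumeration]
    exact Nat.card_congr <| Equiv.subtypeEquivRight fun m =>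
      ⟨And.left, fun hm => ⟨hm, fun h => absurd hx h⟩⟩
  · obtain ⟨y, hy, huniq⟩ := hT.2.1 x hx
    rw [← natCard_isEnumeration_getLast _ (hT.1 _ hy)]
    refine Nat.card_congr <| Equiv.subtypeEquivRight fun m => and_congr_right fun _ => ?_
    refine ⟨fun h => (h hx y).mpr hy, fun h _ z => ?_⟩
    rw [h, Option.some_inj]
    exact ⟨fun hyz => hyz ▸ hy, fun hz => (huniq z hz).symm⟩

theorem natCard_isExitOrdering [Fintype V] [DecidableEq V] :
    Nat.card {σ // IsExitOrdering adj x₀ σ} =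
      Nat.card {T // IsSpanningTreeTo adj x₀ T} *
        ∏ x, if x = x₀ then (Nat.card {y // adj x y}).factorial
          else (Nat.card {y // adj x y} - 1).factorial := by
  let f (σ : {σ // IsExitOrdering adj x₀ σ}) : {T // IsSpanningTreeTo adj x₀ T} :=
    ⟨lastExitEdges x₀ σ.1, σ.2.2⟩
  have hfiber (T : {T // IsSpanningTreeTo adj x₀ T}) :
      {σ // f σ = T} ≃ ∀ x, {m // IsLastExitCompatible adj x₀ T.1 x m} :=
    (Equiv.subtypeEquivRight fun _ => Subtype.ext_iff).trans <|
      (Equiv.subtypeSubtypeEquivSubtypeInter _ (lastExitEdges x₀ · = T.1)).trans <|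
        (Equiv.subtypeEquivRight (isExitOrdering_and_lastExitEdges_eq_iff T.2)).trans
          Equiv.subtypePiEquivPi
  have := Fintype.ofFinite {T // IsSpanningTreeTo adj x₀ T}
  have (T : {T // IsSpanningTreeTo adj x₀ T}) (x : V) :
      Finite {m // IsLastExitCompatible adj x₀ T.1 x m} :=
    Nat.finite_of_card_ne_zero <| by
      rw [natCard_isLastExitCompatible T.2]
      split_ifs <;> positivity
  rw [← Nat.card_congr (Equiv.sigmaFiberEquiv f), Nat.card_congr (Equiv.sigmaCongrRight hfiber),
    Nat.card_sigma]
  simp only [Nat.card_pi, natCard_isLastExitCompatible (Subtype.prop _), Finset.sum_const,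
    Finset.card_univ, smul_eq_mul, Nat.card_eq_fintype_card]

end Counting

theorem natCard_isEulerianFromTo {V : Type*} [Finite V] [DecidableEq V] {adj : V → V → Prop}
    {x₀ : V} (hpos : ∀ x, ∃ y, adj x y)
    (hbal : ∀ x, Nat.card {y // adj x y} = Nat.card {y // adj y x}) :
    Nat.card {l // IsEulerianFromTo adj x₀ x₀ l} = Nat.card {σ // IsExitOrdering adj x₀ σ} := by
  refine Nat.card_congr <| Equiv.ofBijective
    (fun l => ⟨(exits · l.1), isExitOrdering_exits hpos l.2⟩) ⟨fun l l' h => ?_, fun σ => ?_⟩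
  · exact Subtype.ext <| eq_of_head?_eq_of_exits_eq (l.2.1.trans l'.2.1.symm)
      (congrFun (congrArg Subtype.val h))
  · obtain ⟨l, hl, hexits⟩ := exists_isEulerianFromTo_exits_eq hbal σ.2
    exact ⟨⟨l, hl⟩, Subtype.ext (funext hexits)⟩

end BEST

/-- BEST theorem, path-counting version: if every vertex of a finite directed graph has
nonzero in-degree equal to its out-degree, then the number of Eulerian paths starting and
ending at `x₀` equals `#𝓣 · deg x₀ · ∏_x (deg x − 1)!`, where `𝓣` is the set of directed
spanning trees rooted at `x₀` (edges toward `x₀`) and `deg x` is the out-degree of `x`. -/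
theorem statement5 (V : Type*) [Fintype V] (adj : V → V → Prop)
    (hdeg : ∀ x : V, 0 < Nat.card {y : V // adj x y} ∧
      Nat.card {y : V // adj x y} = Nat.card {y : V // adj y x})
    (x₀ : V) :
    Nat.card {l : List V // IsEulerianFromTo adj x₀ x₀ l} =
      Nat.card {T : Set (V × V) // IsSpanningTreeTo adj x₀ T} *
        Nat.card {y : V // adj x₀ y} *
        ∏ x : V, (Nat.card {y : V // adj x y} - 1).factorial := by
  classical
  have hpos (x : V) : ∃ y, adj x y := by
    obtain ⟨⟨y, hy⟩⟩ := (Nat.card_pos_iff.mp (hdeg x).1).1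
    exact ⟨y, hy⟩
  rw [BEST.natCard_isEulerianFromTo hpos fun x => (hdeg x).2, BEST.natCard_isExitOrdering,
    mul_assoc]
  congr 1
  calc ∏ x, (if x = x₀ then (Nat.card {y // adj x y}).factorial
        else (Nat.card {y // adj x y} - 1).factorial)
      = ∏ x, (if x = x₀ then Nat.card {y // adj x y} else 1) *
          (Nat.card {y // adj x y} - 1).factorial := by
        refine Finset.prod_congr rfl fun x _ => ?_
        split_ifs with hx
        · exact (Nat.mul_factorial_pred (hdeg x).1.ne').symm
        · rw [one_mul]
    _ = _ := by rw [Finset.prod_mul_distrib, Finset.prod_ite_eq', if_pos (Finset.mem_univ x₀)]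
end

section
/- Let X be a finite connected k-regular directed graph (every vertex has in-degree and out-degree k ≥ 1), fix x₀ ∈ V(X), and let 𝓔 be the set of Eulerian paths of X that start and end at x₀ (counted as distinct whenever they differ as sequences of vertices). Then there exists a subset 𝓔' ⊆ 𝓔 such that: (i) #𝓔' = k · ((k−1)!)^{#V(X)}; and (ii) for every path δ of length ℓ_δ starting at x₀, the number of paths in 𝓔' that extend δ is at most k · ((k−1)!)^{#V(X) − ℓ_δ/k}. -/
/-!
Rotor walks, the construction behind the BEST theorem. Fix a spanning tree `T` directed toward
`x₀` and, at every vertex, an order of its `k` out-edges in which the tree edge comes last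
(at `x₀` any order); with `n = #V` there are `k! · ((k-1)!)^(n-1) = k · ((k-1)!)^n` such
choices. Starting at `x₀` and always leaving the current vertex by its first unused out-edge
traces an Eulerian circuit, and the circuit determines the orders, so distinct choices give
distinct circuits.

If the circuit starts with a path `δ` of length `ℓ` that leaves each vertex `v` exactly `o_v`
times (so `∑ o_v = ℓ`), the first `o_v` entries of every order are forced, leaving at most
`k · ∏_v (k-1-o_v)!` choices; finally `(k-1-o)! ≤ ((k-1)!)^(1-o/k)`.
-/
open Finset Function

lemma card_embedding_extending {α β : Type*} [Fintype α] [Fintype β] [DecidableEq α]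
    [DecidableEq β] (A : Finset α) (g : α → β) (hg : Set.InjOn g A) :
    Nat.card {f : α ↪ β // ∀ a ∈ A, f a = g a} =
      (Fintype.card β - #A).descFactorial (Fintype.card α - #A) := by
  let restrict (f : {f : α ↪ β // ∀ a ∈ A, f a = g a}) : {a // a ∉ A} ↪ {b // b ∉ A.image g} :=
    ⟨fun a => ⟨f.1 a, fun hb => by
      obtain ⟨a', ha', hga'⟩ := mem_image.1 hb
      exact a.2 (f.1.injective ((f.2 a' ha').trans hga') ▸ ha')⟩,
      fun a b h => Subtype.ext (f.1.injective (congrArg Subtype.val h))⟩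
  let extend (h : {a // a ∉ A} ↪ {b // b ∉ A.image g}) : {f : α ↪ β // ∀ a ∈ A, f a = g a} :=
    ⟨⟨fun a => if ha : a ∈ A then g a else h ⟨a, ha⟩, fun a b hab => by
      by_cases ha : a ∈ A <;> by_cases hb : b ∈ A <;>
        simp only [ha, hb, dite_true, dite_false] at hab
      · exact hg ha hb hab
      · exact absurd (hab ▸ mem_image_of_mem g ha) (h ⟨b, hb⟩).2
      · exact absurd (hab ▸ mem_image_of_mem g hb) (h ⟨a, ha⟩).2
      · exact congrArg Subtype.val (h.injective (Subtype.ext hab))⟩,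
      fun a ha => dif_pos ha⟩
  have e : {f : α ↪ β // ∀ a ∈ A, f a = g a} ≃ ({a // a ∉ A} ↪ {b // b ∉ A.image g}) :=
    { toFun := restrict
      invFun := extend
      left_inv := fun f => by
        ext a
        show (if ha : a ∈ A then g a else f.1 a) = f.1 a
        split_ifs with ha
        exacts [(f.2 a ha).symm, rfl]
      right_inv := fun h => by
        ext a
        exact dif_neg a.2 }
  rw [Nat.card_congr e, Nat.card_eq_fintype_card, Fintype.card_embedding_eq,
    Fintype.card_subtype_compl, Fintype.card_subtype_compl, Fintype.card_coe, Fintype.card_coe,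
    card_image_of_injOn hg]

open Nat in
/-- `s! ≤ (s+1)^(s+1)` absorbs the extra powers, and `s! (s+1)^o ≤ (s+o)!`. -/
lemma factorial_pow_le_factorial_add_pow (s o : ℕ) : s ! ^ (s + 1 + o) ≤ (s + o)! ^ (s + 1) :=
  calc s ! ^ (s + 1 + o) = s ! ^ (s + 1) * s ! ^ o := pow_add ..
    _ ≤ s ! ^ (s + 1) * ((s + 1) ^ (s + 1)) ^ o := by
      gcongr
      exact s.factorial_le_pow.trans ((Nat.pow_le_pow_left s.le_succ s).trans
        (Nat.pow_le_pow_right s.succ_pos s.le_succ))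
    _ = (s ! * (s + 1) ^ o) ^ (s + 1) := by rw [mul_pow, ← pow_mul, ← pow_mul, Nat.mul_comm o]
    _ ≤ (s + o)! ^ (s + 1) := by gcongr; exact Nat.factorial_mul_pow_le_factorial

open Nat in
lemma factorial_sub_le_rpow {k o : ℕ} (ho : o ≤ k) :
    ((k - 1 - o)! : ℝ) ≤ ((k - 1)! : ℝ) ^ (1 - (o : ℝ) / k) := by
  rcases ho.eq_or_lt with rfl | ho
  · rcases Nat.eq_zero_or_pos o with rfl | ho <;> simp [*, ne_of_gt]
  obtain ⟨s, rfl⟩ : ∃ s, k = s + 1 + o := ⟨k - 1 - o, by omega⟩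
  have hkey := factorial_pow_le_factorial_add_pow s o
  refine (pow_le_pow_iff_left₀ (by positivity) (by positivity) (by omega : s + 1 + o ≠ 0)).1 ?_
  rw [← Real.rpow_natCast (_ ^ _) (s + 1 + o), ← Real.rpow_mul (by positivity),
    show (1 - (o : ℝ) / ↑(s + 1 + o)) * ↑(s + 1 + o) = ((s + 1 : ℕ) : ℝ) by
      push_cast; field_simp; ring,
    Real.rpow_natCast, show s + 1 + o - 1 - o = s by omega, show s + 1 + o - 1 = s + o by omega]
  exact_mod_cast hkey

lemma List.zip_tail_map_range {α : Type*} (f : ℕ → α) (n : ℕ) :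
    ((List.range (n + 1)).map f).zip ((List.range (n + 1)).map f).tail =
      (List.range n).map fun t => (f t, f (t + 1)) := by
  apply List.ext_getElem <;> simp

lemma IsSpanningTreeTo.eq_of_mem {V : Type*} {adj : V → V → Prop} {x₀ : V} {T : Set (V × V)}
    (hT : IsSpanningTreeTo adj x₀ T) {v y y' : V} (hy : (v, y) ∈ T) (hy' : (v, y') ∈ T) :
    y = y' := by
  have hv : v ≠ x₀ := by rintro rfl; exact hT.2.2.1 y hy
  exact (hT.2.1 v hv).unique hy hy'

namespace EulerianCount

open scoped Classical

noncomputable section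

variable {V : Type*}

def IsRegularDigraph (adj : V → V → Prop) (k : ℕ) : Prop :=
  ∀ x, Nat.card {y // adj x y} = k ∧ Nat.card {y // adj y x} = k

section Regular

variable [Fintype V] {adj : V → V → Prop} {k : ℕ}

lemma IsRegularDigraph.card_out (hreg : IsRegularDigraph adj k) (x : V) :
    #{y | adj x y} = k := by
  simpa [Nat.card_eq_fintype_card, Fintype.card_subtype] using (hreg x).1

lemma IsRegularDigraph.card_in (hreg : IsRegularDigraph adj k) (y : V) :
    #{x | adj x y} = k := by
  simpa [Nat.card_eq_fintype_card, Fintype.card_subtype] using (hreg y).2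

lemma IsRegularDigraph.card_out_subtype (hreg : IsRegularDigraph adj k) (v : V) :
    Fintype.card {y // adj v y} = k := by
  rw [← Nat.card_eq_fintype_card, (hreg v).1]

/-- Edges leaving the set `S` reachable from `v` all stay in `S`; since every vertex has as many
in-edges as out-edges, the edges entering `S` must then all come from `S`. -/
lemma IsRegularDigraph.reflTransGen_of_adj (hreg : IsRegularDigraph adj k) {u v : V}
    (huv : adj u v) : Relation.ReflTransGen adj v u := by
  set S : Finset V := {w | Relation.ReflTransGen adj v w}
  have hclosed : ∀ a ∈ S, ∀ b, adj a b → b ∈ S := fun a ha b hab => by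
    simp only [S, mem_filter, mem_univ, true_and] at ha ⊢
    exact ha.tail hab
  by_contra hu
  have hv : v ∈ S := by simpa [S] using Relation.ReflTransGen.refl
  have hdouble := sum_card_bipartiteAbove_eq_sum_card_bipartiteBelow (s := S) (t := univ) adj
  have hout : ∑ a ∈ S, #(univ.bipartiteAbove adj a) = ∑ _b ∈ S, k :=
    sum_congr rfl fun a _ => hreg.card_out a
  have hin : ∑ b, #(S.bipartiteBelow adj b) = ∑ b ∈ S, #(S.bipartiteBelow adj b) := by
    refine (sum_subset (subset_univ S) fun b _ hb => ?_).symm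
    refine card_eq_zero.2 (filter_eq_empty_iff.2 fun a ha hab => hb (hclosed a ha b hab))
  have hlt : ∑ b ∈ S, #(S.bipartiteBelow adj b) < ∑ _b ∈ S, k := by
    refine sum_lt_sum (fun b _ => ?_) ⟨v, hv, ?_⟩
    · exact (card_le_card (filter_subset_filter _ (subset_univ S))).trans_eq (hreg.card_in b)
    · refine (card_lt_card ⟨filter_subset_filter _ (subset_univ S), fun h => ?_⟩).trans_eq
        (hreg.card_in v)
      have hmem : u ∈ S.bipartiteBelow adj v := h (by simpa using huv)
      exact hu (by simpa [S] using (mem_bipartiteBelow adj).1 hmem |>.1)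
  omega

lemma IsRegularDigraph.reflTransGen (hreg : IsRegularDigraph adj k)
    (hconn : ∀ u v : V, Relation.ReflTransGen (fun a c => adj a c ∨ adj c a) u v) (u v : V) :
    Relation.ReflTransGen adj u v := by
  induction hconn u v with
  | refl => exact .refl
  | tail _ h ih => exact h.elim ih.tail fun h => ih.trans (hreg.reflTransGen_of_adj h)

end Regular

section SpanningTree

variable (adj : V → V → Prop) (x₀ : V)

def ReachesIn : ℕ → V → Prop
  | 0, u => u = x₀
  | n + 1, u => ∃ z, adj u z ∧ ReachesIn n z

variable {adj x₀}

lemma exists_reachesIn {u : V} (h : Relation.ReflTransGen adj u x₀) :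
    ∃ n, ReachesIn adj x₀ n u := by
  induction h using Relation.ReflTransGen.head_induction_on with
  | refl => exact ⟨0, rfl⟩
  | head h _ ih => obtain ⟨n, hn⟩ := ih; exact ⟨n + 1, _, h, hn⟩

/-- Breadth-first search: every `u ≠ x₀` points to an out-neighbour closer to `x₀`. -/
lemma exists_isSpanningTreeTo (h : ∀ u, Relation.ReflTransGen adj u x₀) :
    ∃ T, IsSpanningTreeTo adj x₀ T := by
  have hreach u : ∃ n, ReachesIn adj x₀ n u := exists_reachesIn (h u)
  let d u := Nat.find (hreach u)
  have hcloser u (hu : u ≠ x₀) : ∃ z, adj u z ∧ d z < d u := by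
    have hspec := Nat.find_spec (hreach u)
    rcases hd : d u with _ | m
    · exact absurd (hd ▸ hspec : ReachesIn adj x₀ 0 u) hu
    · obtain ⟨z, hz, hzm⟩ := (hd ▸ hspec : ReachesIn adj x₀ (m + 1) u)
      exact ⟨z, hz, (Nat.find_le hzm).trans_lt m.lt_succ_self⟩
  choose! nxt hnxt_adj hnxt_lt using hcloser
  refine ⟨{p | p.1 ≠ x₀ ∧ p.2 = nxt p.1}, fun p hp => hp.2 ▸ hnxt_adj p.1 hp.1,
    fun x hx => ⟨nxt x, ⟨hx, rfl⟩, fun y hy => hy.2⟩, fun y hy => hy.1 rfl, fun x => ?_⟩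
  induction hdx : d x using Nat.strong_induction_on generalizing x with
  | _ n ih =>
    by_cases hx : x = x₀
    · exact hx ▸ .refl
    · exact .head ⟨hx, rfl⟩ (ih _ (hdx ▸ hnxt_lt x hx) _ rfl)

end SpanningTree

/-- `σ v` lists the out-neighbours of `v` in the order in which the walk uses them. -/
abbrev ExitOrder (adj : V → V → Prop) (k : ℕ) := ∀ v : V, Fin k ↪ {y // adj v y}

lemma IsRegularDigraph.exists_exitOrder_eq [Fintype V] {adj : V → V → Prop} {k : ℕ}
    (hreg : IsRegularDigraph adj k) (σ : ExitOrder adj k) (v : V) (y : {y // adj v y}) :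
    ∃ i, σ v i = y := by
  refine ((Fintype.bijective_iff_injective_and_card (σ v)).2 ⟨(σ v).injective, ?_⟩).2 y
  rw [Fintype.card_fin, hreg.card_out_subtype]

section RotorWalk

variable {adj : V → V → Prop} {k : ℕ} (σ : ExitOrder adj k) (x₀ : V)

/-- The state of the rotor walk is the current vertex together with the number of exits already
used at each vertex; the walk leaves by the next unused exit, and stays put if there is none. -/
def step (s : V × (V → ℕ)) : V × (V → ℕ) :=
  if h : s.2 s.1 < k then (σ s.1 ⟨s.2 s.1, h⟩, update s.2 s.1 (s.2 s.1 + 1)) else s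

def state (t : ℕ) : V × (V → ℕ) := (step σ)^[t] (x₀, 0)

def pos (t : ℕ) : V := (state σ x₀ t).1

def cnt (t : ℕ) : V → ℕ := (state σ x₀ t).2

variable {σ x₀} {t : ℕ}

@[simp] lemma pos_zero : pos σ x₀ 0 = x₀ := rfl

@[simp] lemma cnt_zero : cnt σ x₀ 0 = 0 := rfl

lemma pos_succ {v : V} {i : Fin k} (hv : pos σ x₀ t = v) (hi : cnt σ x₀ t v = i) :
    pos σ x₀ (t + 1) = σ v i := by
  subst hv
  have h : cnt σ x₀ t (pos σ x₀ t) < k := hi ▸ i.2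
  simp only [pos, cnt, state, iterate_succ_apply', step] at h hi ⊢
  rw [dif_pos h]
  exact congrArg (fun j => ((σ _ j : {y // adj _ y}) : V)) (Fin.ext hi)

lemma cnt_succ (h : cnt σ x₀ t (pos σ x₀ t) < k) :
    cnt σ x₀ (t + 1) = update (cnt σ x₀ t) (pos σ x₀ t) (cnt σ x₀ t (pos σ x₀ t) + 1) := by
  simp only [pos, cnt, state, iterate_succ_apply', step] at h ⊢
  rw [dif_pos h]

lemma state_succ_of_le (h : k ≤ cnt σ x₀ t (pos σ x₀ t)) : state σ x₀ (t + 1) = state σ x₀ t := by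
  simp only [pos, cnt, state, iterate_succ_apply', step] at h ⊢
  rw [dif_neg h.not_gt]

lemma pos_succ_of_le (h : k ≤ cnt σ x₀ t (pos σ x₀ t)) : pos σ x₀ (t + 1) = pos σ x₀ t :=
  congrArg Prod.fst (state_succ_of_le h)

lemma cnt_succ_of_le (h : k ≤ cnt σ x₀ t (pos σ x₀ t)) : cnt σ x₀ (t + 1) = cnt σ x₀ t :=
  congrArg Prod.snd (state_succ_of_le h)

lemma cnt_le (t : ℕ) (v : V) : cnt σ x₀ t v ≤ k := by
  induction t with
  | zero => simp
  | succ t ih =>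
    by_cases h : cnt σ x₀ t (pos σ x₀ t) < k
    · rw [cnt_succ h, update_apply]
      split_ifs with hv
      · exact hv ▸ h
      · exact ih
    · rwa [cnt_succ_of_le (not_lt.1 h)]

lemma cnt_mono (v : V) : Monotone (cnt σ x₀ · v) := by
  refine monotone_nat_of_le_succ fun t => ?_
  by_cases h : cnt σ x₀ t (pos σ x₀ t) < k
  · rw [cnt_succ h, update_apply]
    split_ifs with hv
    · subst hv; omega
    · rfl
  · rw [cnt_succ_of_le (not_lt.1 h)]

lemma exists_exit {T : ℕ} {v : V} {i : ℕ} (hi : i < cnt σ x₀ T v) :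
    ∃ t < T, pos σ x₀ t = v ∧ cnt σ x₀ t v = i := by
  induction T with
  | zero => simp at hi
  | succ T ih =>
    by_cases hlt : i < cnt σ x₀ T v
    · obtain ⟨t, ht, h⟩ := ih hlt
      exact ⟨t, ht.trans T.lt_succ_self, h⟩
    by_cases h : cnt σ x₀ T (pos σ x₀ T) < k
    · rw [cnt_succ h, update_apply] at hi
      split_ifs at hi with hv
      · exact ⟨T, T.lt_succ_self, hv.symm, by subst hv; omega⟩
      · omega
    · rw [cnt_succ_of_le (not_lt.1 h)] at hi
      exact absurd hi hlt

variable {σ' : ExitOrder adj k}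

lemma cnt_eq_of_pos_eq {T : ℕ} (h : ∀ t ≤ T, pos σ x₀ t = pos σ' x₀ t) :
    ∀ t ≤ T, cnt σ x₀ t = cnt σ' x₀ t := by
  intro t
  induction t with
  | zero => simp
  | succ t ih =>
    intro ht
    have hc := ih (by omega)
    have hp := h t (by omega)
    by_cases hlt : cnt σ x₀ t (pos σ x₀ t) < k
    · have hlt' : cnt σ' x₀ t (pos σ' x₀ t) < k := hc ▸ hp ▸ hlt
      rw [cnt_succ hlt, cnt_succ hlt', hc, hp]
    · have hlt' : ¬ cnt σ' x₀ t (pos σ' x₀ t) < k := hc ▸ hp ▸ hlt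
      rw [cnt_succ_of_le (not_lt.1 hlt), cnt_succ_of_le (not_lt.1 hlt'), hc]

lemma apply_eq_of_pos_eq {T : ℕ} (h : ∀ t ≤ T, pos σ x₀ t = pos σ' x₀ t) {v : V} {i : Fin k}
    (hi : i.val < cnt σ x₀ T v) : σ v i = σ' v i := by
  obtain ⟨t, htT, hv, hcnt⟩ := exists_exit hi
  have hcnt' : cnt σ' x₀ t v = i := cnt_eq_of_pos_eq h t htT.le ▸ hcnt
  exact Subtype.ext <| (pos_succ hv hcnt).symm.trans <|
    (h (t + 1) htT).trans (pos_succ ((h t htT.le).symm.trans hv) hcnt')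

variable [Fintype V]

lemma sum_cnt_le (t : ℕ) : ∑ v, cnt σ x₀ t v ≤ t := by
  induction t with
  | zero => simp
  | succ t ih =>
    by_cases h : cnt σ x₀ t (pos σ x₀ t) < k
    · rw [cnt_succ h, sum_update_of_mem (mem_univ _)]
      rw [sum_eq_add_sum_sdiff_singleton_of_mem (mem_univ (pos σ x₀ t))] at ih
      omega
    · rw [cnt_succ_of_le (not_lt.1 h)]
      exact ih.trans t.le_succ

lemma sum_cnt_eq {T : ℕ} (hT : ∀ t < T, cnt σ x₀ t (pos σ x₀ t) < k) : ∑ v, cnt σ x₀ T v = T := by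
  induction T with
  | zero => simp
  | succ T ih =>
    rw [cnt_succ (hT T T.lt_succ_self), sum_update_of_mem (mem_univ _)]
    have := ih fun t ht => hT t (ht.trans T.lt_succ_self)
    rw [sum_eq_add_sum_sdiff_singleton_of_mem (mem_univ (pos σ x₀ T))] at this
    omega

variable (σ) in
def usedExitsTo (c : V → ℕ) (u : V) : Finset (V × Fin k) :=
  {p | p.2.val < c p.1 ∧ (σ p.1 p.2 : V) = u}

lemma card_usedExitsTo_update {c : V → ℕ} {v : V} (h : c v < k) (u : V) :
    #(usedExitsTo σ (update c v (c v + 1)) u) =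
      #(usedExitsTo σ c u) + if (σ v ⟨c v, h⟩ : V) = u then 1 else 0 := by
  have hsplit : usedExitsTo σ (update c v (c v + 1)) u = usedExitsTo σ c u ∪
      ({(v, ⟨c v, h⟩)} : Finset (V × Fin k)).filter fun p => (σ p.1 p.2 : V) = u := by
    ext ⟨w, i⟩
    by_cases hw : w = v
    · subst hw
      simp only [usedExitsTo, mem_union, mem_filter, mem_univ, true_and, mem_singleton,
        update_self, Prod.mk.injEq, Fin.ext_iff]
      grind
    · simp [usedExitsTo, hw]
  rw [hsplit, card_union_of_disjoint (disjoint_left.2 fun p hp hp' => ?_), filter_singleton]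
  · split_ifs <;> simp
  · rw [mem_singleton.1 (mem_filter.1 hp').1] at hp
    simp [usedExitsTo] at hp

lemma injOn_fst_usedExitsTo (c : V → ℕ) (u : V) :
    Set.InjOn Prod.fst (usedExitsTo σ c u : Set (V × Fin k)) := by
  rintro ⟨w, i⟩ hi ⟨w', j⟩ hj (rfl : w = w')
  simp only [usedExitsTo, coe_filter, mem_univ, true_and, Set.mem_ofPred_eq] at hi hj
  exact Prod.ext rfl ((σ w).injective (Subtype.ext (hi.2.trans hj.2.symm)))

lemma image_fst_usedExitsTo_subset (c : V → ℕ) (u : V) :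
    (usedExitsTo σ c u).image Prod.fst ⊆ ({w | adj w u} : Finset V) := by
  intro w hw
  obtain ⟨⟨w, i⟩, hi, rfl⟩ := mem_image.1 hw
  simp only [usedExitsTo, mem_filter, mem_univ, true_and] at hi ⊢
  exact hi.2 ▸ (σ w i).2

lemma card_usedExitsTo_le (hreg : IsRegularDigraph adj k) (c : V → ℕ) (u : V) :
    #(usedExitsTo σ c u) ≤ k := by
  rw [← card_image_of_injOn (injOn_fst_usedExitsTo c u)]
  exact (card_le_card (image_fst_usedExitsTo_subset c u)).trans_eq (hreg.card_in u)

lemma exists_used_of_card_usedExitsTo (hreg : IsRegularDigraph adj k) {c : V → ℕ} {u w : V}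
    (hc : #(usedExitsTo σ c u) = k) (hw : adj w u) :
    ∃ i : Fin k, i.val < c w ∧ (σ w i : V) = u := by
  have hfull := eq_of_subset_of_card_le (image_fst_usedExitsTo_subset c u)
    (by rw [card_image_of_injOn (injOn_fst_usedExitsTo c u), hc, hreg.card_in u])
  have : w ∈ (usedExitsTo σ c u).image Prod.fst := hfull ▸ by simpa using hw
  obtain ⟨⟨w, i⟩, hi, rfl⟩ := mem_image.1 this
  exact ⟨i, by simpa [usedExitsTo] using hi⟩

/-- Flow conservation: arrivals at `u` (counting the start) match departures from `u` (counting
the current position). -/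
lemma card_usedExitsTo_cnt (t : ℕ) (u : V) :
    #(usedExitsTo σ (cnt σ x₀ t) u) + (if u = x₀ then 1 else 0) =
      cnt σ x₀ t u + if u = pos σ x₀ t then 1 else 0 := by
  induction t with
  | zero => by_cases hu : u = x₀ <;> simp [usedExitsTo, hu]
  | succ t ih =>
    by_cases h : cnt σ x₀ t (pos σ x₀ t) < k
    · rw [cnt_succ h, card_usedExitsTo_update h, pos_succ (i := ⟨_, h⟩) rfl rfl, update_apply]
      split_ifs at ih ⊢ <;> grind
    · rwa [cnt_succ_of_le (not_lt.1 h), pos_succ_of_le (not_lt.1 h)]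

lemma cnt_pos_lt_of_ne (hreg : IsRegularDigraph adj k) (h : pos σ x₀ t ≠ x₀) :
    cnt σ x₀ t (pos σ x₀ t) < k := by
  have := card_usedExitsTo_cnt (σ := σ) (x₀ := x₀) t (pos σ x₀ t)
  have := card_usedExitsTo_le (σ := σ) hreg (cnt σ x₀ t) (pos σ x₀ t)
  simp only [h, if_true, if_false] at *
  omega

end RotorWalk

section Eulerian

variable {adj : V → V → Prop} {k : ℕ}

variable (x₀ : V) (T : Set (V × V)) in
def LastExitInTree (σ : ExitOrder adj k) : Prop :=
  ∀ v, v ≠ x₀ → ∀ i : Fin k, i.val + 1 = k → (v, (σ v i : V)) ∈ T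

variable [Fintype V] {σ σ' : ExitOrder adj k} {x₀ : V} {T : Set (V × V)} {t : ℕ}

/-- Once the walk is stuck (necessarily at `x₀`), every in-edge of a saturated vertex has been
used; the tree edge out of a vertex is its last exit, so saturation spreads from `x₀` along the
tree. -/
lemma cnt_eq_of_stuck (hreg : IsRegularDigraph adj k) (hT : IsSpanningTreeTo adj x₀ T)
    (hσ : LastExitInTree x₀ T σ) (h : k ≤ cnt σ x₀ t (pos σ x₀ t)) (v : V) :
    cnt σ x₀ t v = k := by
  have hx : pos σ x₀ t = x₀ := by_contra fun hx => (cnt_pos_lt_of_ne hreg hx).not_ge h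
  have hbal u : #(usedExitsTo σ (cnt σ x₀ t) u) = cnt σ x₀ t u := by
    have := card_usedExitsTo_cnt (σ := σ) (x₀ := x₀) t u
    rw [hx] at this
    omega
  refine Relation.ReflTransGen.head_induction_on (hT.2.2.2 v) ?_ fun {a c} hac _ ih => ?_
  · rw [hx] at h
    exact le_antisymm (cnt_le _ _) h
  · have ha : a ≠ x₀ := by rintro rfl; exact hT.2.2.1 c hac
    obtain ⟨i, hi, hic⟩ :=
      exists_used_of_card_usedExitsTo (w := a) hreg ((hbal c).trans ih) (hT.1 (a, c) hac)
    have hlast : i.val + 1 = k := by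
      by_contra hne
      have hj : (⟨k - 1, by omega⟩ : Fin k).val + 1 = k := by simp only; omega
      have hcj := hT.eq_of_mem (hσ a ha _ hj) (hic ▸ hac)
      have := congrArg Fin.val ((σ a).injective (Subtype.ext hcj))
      simp only at this
      omega
    have := cnt_le (σ := σ) (x₀ := x₀) t a
    omega

variable (σ x₀) in
def walk : List V := (List.range (k * Fintype.card V + 1)).map (pos σ x₀)

lemma length_walk : (walk σ x₀).length = k * Fintype.card V + 1 := by
  simp [walk]

lemma zip_walk_tail : (walk σ x₀).zip (walk σ x₀).tail =
    (List.range (k * Fintype.card V)).map fun t => (pos σ x₀ t, pos σ x₀ (t + 1)) :=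
  List.zip_tail_map_range _ _

lemma pos_eq_of_isPrefix {δ : List V} (h : δ <+: walk σ x₀) (h' : δ <+: walk σ' x₀) {t : ℕ}
    (ht : t < δ.length) : pos σ x₀ t = pos σ' x₀ t := by
  have := (h.getElem ht).symm.trans (h'.getElem ht)
  simpa [walk] using this

variable (hreg : IsRegularDigraph adj k) (hT : IsSpanningTreeTo adj x₀ T)
  (hσ : LastExitInTree x₀ T σ)
include hreg hT hσ

lemma cnt_pos_lt_of_lt (ht : t < k * Fintype.card V) : cnt σ x₀ t (pos σ x₀ t) < k := by
  by_contra h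
  have hsum := sum_cnt_le (σ := σ) (x₀ := x₀) t
  rw [sum_congr rfl fun v _ => cnt_eq_of_stuck hreg hT hσ (not_lt.1 h) v, sum_const, card_univ,
    smul_eq_mul] at hsum
  rw [mul_comm] at ht
  omega

lemma cnt_final (v : V) : cnt σ x₀ (k * Fintype.card V) v = k := by
  have hsum : ∑ v, cnt σ x₀ (k * Fintype.card V) v = ∑ _v : V, k := by
    rw [sum_cnt_eq fun t ht => cnt_pos_lt_of_lt hreg hT hσ ht, sum_const, card_univ, smul_eq_mul,
      mul_comm]
  exact (sum_eq_sum_iff_of_le fun v _ => cnt_le _ v).1 hsum v (mem_univ v)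

lemma pos_final : pos σ x₀ (k * Fintype.card V) = x₀ :=
  by_contra fun h => (cnt_pos_lt_of_ne hreg h).ne (cnt_final hreg hT hσ _)

lemma pos_succ_ne {t s : ℕ} (hts : t < s) (hs : s < k * Fintype.card V)
    (h : pos σ x₀ t = pos σ x₀ s) : pos σ x₀ (t + 1) ≠ pos σ x₀ (s + 1) := by
  have ht' := cnt_pos_lt_of_lt hreg hT hσ (hts.trans hs)
  have hs' := cnt_pos_lt_of_lt hreg hT hσ hs
  have hmono : cnt σ x₀ (t + 1) (pos σ x₀ s) ≤ cnt σ x₀ s (pos σ x₀ s) :=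
    cnt_mono _ (show t + 1 ≤ s by omega)
  rw [cnt_succ ht', h, update_self] at hmono
  rw [pos_succ (i := ⟨cnt σ x₀ t (pos σ x₀ s), h ▸ ht'⟩) h rfl, pos_succ (i := ⟨_, hs'⟩) rfl rfl]
  intro heq
  have := congrArg Fin.val ((σ _).injective (Subtype.ext heq))
  simp only at this
  omega

theorem isEulerianFromTo_walk : IsEulerianFromTo adj x₀ x₀ (walk σ x₀) := by
  refine ⟨by simp [walk, List.range_succ_eq_map],
    by simp [walk, List.range_succ, pos_final hreg hT hσ], ?_, fun p => ?_⟩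
  · rw [zip_walk_tail]
    refine List.Nodup.map_on (fun t ht s hs hts => ?_) List.nodup_range
    simp only [List.mem_range, Prod.mk.injEq] at ht hs hts
    by_contra hne
    rcases Nat.lt_or_gt_of_ne hne with hlt | hlt
    · exact pos_succ_ne hreg hT hσ hlt hs hts.1 hts.2
    · exact pos_succ_ne hreg hT hσ hlt ht hts.1.symm hts.2.symm
  rw [zip_walk_tail, List.mem_map]
  constructor
  · rintro ⟨t, ht, rfl⟩
    have h := cnt_pos_lt_of_lt hreg hT hσ (List.mem_range.1 ht)
    rw [pos_succ (i := ⟨_, h⟩) rfl rfl]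
    exact (σ _ _).2
  · intro hp
    obtain ⟨i, hi⟩ := hreg.exists_exitOrder_eq σ p.1 ⟨p.2, hp⟩
    have hi' : i.val < cnt σ x₀ (k * Fintype.card V) p.1 := by
      rw [cnt_final hreg hT hσ]
      exact i.2
    obtain ⟨t, ht, hv, hcnt⟩ := exists_exit hi'
    refine ⟨t, List.mem_range.2 ht, ?_⟩
    rw [hv, pos_succ hv hcnt, hi]

lemma eq_of_walk_eq (h : walk σ x₀ = walk σ' x₀) : σ = σ' := by
  have hpos t (ht : t ≤ k * Fintype.card V) : pos σ x₀ t = pos σ' x₀ t :=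
    pos_eq_of_isPrefix (List.prefix_refl _) (h ▸ List.prefix_refl _) (by rw [length_walk]; omega)
  funext v
  ext i
  refine congrArg Subtype.val (apply_eq_of_pos_eq hpos ?_)
  rw [cnt_final hreg hT hσ]
  exact i.2

end Eulerian

section Counting

open Nat

variable [Fintype V] {adj : V → V → Prop} {k : ℕ}

lemma IsRegularDigraph.card_outEmbedding_extending (hreg : IsRegularDigraph adj k) (v : V)
    (A : Finset (Fin k)) (g : Fin k → {y // adj v y}) (hg : Set.InjOn g A) :
    Nat.card {f : Fin k ↪ {y // adj v y} // ∀ i ∈ A, f i = g i} = (k - #A)! := by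
  rw [card_embedding_extending A g hg, Fintype.card_fin, hreg.card_out_subtype,
    Nat.descFactorial_self]

variable {x₀ : V} {T : Set (V × V)}

theorem card_lastExitInTree (hreg : IsRegularDigraph adj k) (hT : IsSpanningTreeTo adj x₀ T)
    (hk : 1 ≤ k) :
    Nat.card {σ : ExitOrder adj k // LastExitInTree x₀ T σ} = k * (k - 1)! ^ Fintype.card V := by
  let P v (f : Fin k ↪ {y // adj v y}) : Prop :=
    v ≠ x₀ → ∀ i : Fin k, i.val + 1 = k → (v, (f i : V)) ∈ T
  have hcard v : Nat.card {f // P v f} = (k - 1)! * if v = x₀ then k else 1 := by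
    by_cases hv : v = x₀
    · subst hv
      rw [Nat.card_congr (Equiv.subtypeUnivEquiv fun _ h => absurd rfl h),
        Nat.card_eq_fintype_card, Fintype.card_embedding_eq, Fintype.card_fin,
        hreg.card_out_subtype, Nat.descFactorial_self, if_pos rfl, mul_comm,
        Nat.mul_factorial_pred (by omega)]
    · obtain ⟨y, hy, -⟩ := hT.2.1 v hv
      let A : Finset (Fin k) := {i | i.val + 1 = k}
      have hA : #A = 1 :=
        card_eq_one.2 ⟨⟨k - 1, by omega⟩, by ext i; simp [A, Fin.ext_iff]; omega⟩
      have e : {f // P v f} ≃ {f : Fin k ↪ {y // adj v y} // ∀ i ∈ A, f i = ⟨y, hT.1 _ hy⟩} :=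
        Equiv.subtypeEquivRight fun f => by
          simp only [P, A, mem_filter, mem_univ, true_and, Subtype.ext_iff]
          exact ⟨fun h i hi => hT.eq_of_mem (h hv i hi) hy, fun h _ i hi => h i hi ▸ hy⟩
      rw [Nat.card_congr e, hreg.card_outEmbedding_extending v A _
        (fun i hi j hj _ => Fin.ext (by simp [A] at hi hj; omega)), hA, if_neg hv, mul_one]
  refine (Nat.card_congr (Equiv.subtypePiEquivPi (p := P))).trans ?_
  rw [Nat.card_pi, prod_congr rfl fun v _ => hcard v, prod_mul_distrib, prod_const, prod_ite_eq',
    if_pos (mem_univ _), Finset.card_univ, mul_comm]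

lemma IsRegularDigraph.card_exitOrder_agreeing (hreg : IsRegularDigraph adj k)
    (A : V → Finset (Fin k)) (τ : ExitOrder adj k) :
    Nat.card {σ : ExitOrder adj k // ∀ v, ∀ i ∈ A v, σ v i = τ v i} = ∏ v, (k - #(A v))! :=
  (Nat.card_congr (Equiv.subtypePiEquivPi
    (p := fun v (f : Fin k ↪ {y // adj v y}) => ∀ i ∈ A v, f i = τ v i))).trans <|
    Nat.card_pi.trans <| prod_congr rfl fun v _ =>
      hreg.card_outEmbedding_extending v (A v) (τ v) (τ v).injective.injOn

def pinnedSlots (k o : ℕ) (pinLast : Prop) : Finset (Fin k) :=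
  {i | i.val < o ∨ (pinLast ∧ i.val + 1 = k)}

lemma factorial_sub_card_pinnedSlots_le {o : ℕ} (hk : 1 ≤ k) (ho : o ≤ k) (pinLast : Prop)
    [Decidable pinLast] :
    (k - #(pinnedSlots k o pinLast))! ≤ (if pinLast then 1 else k) * (k - 1 - o)! := by
  have hfree : k - #(pinnedSlots k o pinLast) ≤ k - o - if pinLast then 1 else 0 := by
    have hc : #(pinnedSlots k o pinLast)ᶜ = k - #(pinnedSlots k o pinLast) := by
      rw [card_compl, Fintype.card_fin]
    rw [← hc]
    refine (card_le_card_of_injOn Fin.val (t := Ico o (k - if pinLast then 1 else 0))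
      (fun i hi => ?_) Fin.val_injective.injOn).trans (by rw [Nat.card_Ico]; split_ifs <;> omega)
    have := i.2
    simp only [pinnedSlots, coe_compl, coe_filter, mem_univ, true_and, Set.mem_compl_iff,
      Set.mem_ofPred_eq, not_or, not_and] at hi
    simp only [coe_Ico, Set.mem_Ico]
    split_ifs at * <;> grind
  split_ifs at hfree ⊢
  · simpa [show k - o - 1 = k - 1 - o by omega] using factorial_le hfree
  · rw [Nat.sub_zero] at hfree
    refine (factorial_le hfree).trans ?_
    rcases ho.lt_or_eq with ho | rfl
    · rw [show k - o = (k - 1 - o) + 1 by omega, factorial_succ]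
      exact Nat.mul_le_mul_right _ (by omega)
    · simp [hk]

/-- An order whose walk starts with `δ` agrees with `σs` on the exits used along `δ` and on the
tree exits, so only the remaining exits are free. -/
theorem card_extending_le (hreg : IsRegularDigraph adj k) (hT : IsSpanningTreeTo adj x₀ T)
    (hk : 1 ≤ k) {σs : ExitOrder adj k} (hσs : LastExitInTree x₀ T σs) {δ : List V}
    (hδ : δ ≠ []) (hδs : δ <+: walk σs x₀) :
    Nat.card {σ : {σ : ExitOrder adj k // LastExitInTree x₀ T σ} // δ <+: walk σ.1 x₀} ≤
      k * ∏ v, (k - 1 - cnt σs x₀ (δ.length - 1) v)! := by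
  set o := cnt σs x₀ (δ.length - 1)
  have hagree (σ : {σ : ExitOrder adj k // LastExitInTree x₀ T σ}) (hσ : δ <+: walk σ.1 x₀) v :
      ∀ i ∈ pinnedSlots k (o v) (v ≠ x₀), σ.1 v i = σs v i := by
    intro i hi
    simp only [pinnedSlots, mem_filter, mem_univ, true_and] at hi
    rcases hi with hi | ⟨hv, hi⟩
    · have hlen := List.length_pos_iff.2 hδ
      exact (apply_eq_of_pos_eq (fun t ht => pos_eq_of_isPrefix hδs hσ (by omega)) hi).symm
    · exact Subtype.ext (hT.eq_of_mem (σ.2 v hv i hi) (hσs v hv i hi))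
  calc _ ≤ Nat.card {σ : ExitOrder adj k // ∀ v, ∀ i ∈ pinnedSlots k (o v) (v ≠ x₀),
        σ v i = σs v i} :=
        Nat.card_le_card_of_injective (fun σ => ⟨σ.1.1, hagree σ.1 σ.2⟩) fun σ τ h => by
          simp only [Subtype.mk.injEq] at h
          exact Subtype.ext (Subtype.ext h)
    _ = ∏ v, (k - #(pinnedSlots k (o v) (v ≠ x₀)))! := hreg.card_exitOrder_agreeing _ σs
    _ ≤ ∏ v, (if v ≠ x₀ then 1 else k) * (k - 1 - o v)! :=
        prod_le_prod' fun v _ => factorial_sub_card_pinnedSlots_le hk (cnt_le _ _) _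
    _ = k * ∏ v, (k - 1 - o v)! := by
        simp_rw [ite_not]
        rw [prod_mul_distrib, prod_ite_eq', if_pos (mem_univ _)]

lemma prod_factorial_le_rpow (o : V → ℕ) (ho : ∀ v, o v ≤ k) :
    (∏ v, ((k - 1 - o v)! : ℝ)) ≤
      ((k - 1)! : ℝ) ^ ((Fintype.card V : ℝ) - ((∑ v, o v : ℕ) : ℝ) / k) :=
  calc (∏ v, ((k - 1 - o v)! : ℝ)) ≤ ∏ v, ((k - 1)! : ℝ) ^ (1 - (o v : ℝ) / k) :=
        prod_le_prod (fun _ _ => by positivity) fun v _ => factorial_sub_le_rpow (ho v)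
    _ = _ := by
      rw [← Real.rpow_sum_of_pos (by positivity), sum_sub_distrib, ← sum_div]
      simp

theorem card_extending_le_rpow (hreg : IsRegularDigraph adj k) (hT : IsSpanningTreeTo adj x₀ T)
    (hk : 1 ≤ k) {δ : List V} (hδ : δ ≠ []) :
    (Nat.card {σ : {σ : ExitOrder adj k // LastExitInTree x₀ T σ} // δ <+: walk σ.1 x₀} : ℝ) ≤
      k * ((k - 1)! : ℝ) ^ ((Fintype.card V : ℝ) - ((δ.length : ℝ) - 1) / k) := by
  rcases isEmpty_or_nonempty {σ : {σ : ExitOrder adj k // LastExitInTree x₀ T σ} //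
    δ <+: walk σ.1 x₀} with hempty | ⟨σs, hδs⟩
  · rw [Nat.card_of_isEmpty, Nat.cast_zero]
    positivity
  have hL : δ.length - 1 ≤ k * Fintype.card V := by
    have := hδs.length_le
    rw [length_walk] at this
    omega
  have hsum : ∑ v, cnt σs.1 x₀ (δ.length - 1) v = δ.length - 1 :=
    sum_cnt_eq fun t ht => cnt_pos_lt_of_lt hreg hT σs.2 (by omega)
  have hlen : ((δ.length - 1 : ℕ) : ℝ) = (δ.length : ℝ) - 1 := by
    rw [Nat.cast_sub (List.length_pos_iff.2 hδ), Nat.cast_one]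
  calc (Nat.card {σ : {σ : ExitOrder adj k // LastExitInTree x₀ T σ} // δ <+: walk σ.1 x₀} : ℝ)
      ≤ k * ∏ v, ((k - 1 - cnt σs.1 x₀ (δ.length - 1) v)! : ℝ) := by
        exact_mod_cast card_extending_le hreg hT hk σs.2 hδ hδs
    _ ≤ _ := by
        grw [prod_factorial_le_rpow _ fun v => cnt_le _ v, hsum, hlen]

end Counting

end

end EulerianCount

open EulerianCount

/-- Proposition: in a finite connected `k`-regular directed graph (`k ≥ 1`), for any
vertex `x₀` there is a set `𝓔'` of Eulerian paths from `x₀` to `x₀` with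
`#𝓔' = k·((k−1)!)^{#V}` such that for every path `δ` starting at `x₀`, of length
`ℓ_δ = δ.length − 1`, the number of paths in `𝓔'` extending `δ` is at most
`k·((k−1)!)^{#V − ℓ_δ/k}`. -/
theorem statement7 (V : Type*) [Fintype V] (adj : V → V → Prop) (k : ℕ) (hk : 1 ≤ k)
    (hreg : ∀ x : V, Nat.card {y : V // adj x y} = k ∧ Nat.card {y : V // adj y x} = k)
    (hconn : ∀ u v : V, Relation.ReflTransGen (fun a c => adj a c ∨ adj c a) u v)
    (x₀ : V) :
    ∃ E' : Set (List V),
      (∀ l ∈ E', IsEulerianFromTo adj x₀ x₀ l) ∧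
      Nat.card E' = k * Nat.factorial (k - 1) ^ Fintype.card V ∧
      ∀ δ : List V, δ.head? = some x₀ → δ.Chain' adj →
        (Nat.card {l : List V // l ∈ E' ∧ δ <+: l} : ℝ) ≤
          (k : ℝ) * (Nat.factorial (k - 1) : ℝ) ^
            ((Fintype.card V : ℝ) - ((δ.length : ℝ) - 1) / (k : ℝ)) := by
  have hreg : IsRegularDigraph adj k := hreg
  obtain ⟨T, hT⟩ := exists_isSpanningTreeTo fun u => hreg.reflTransGen hconn u x₀
  let walkOf (σ : {σ : ExitOrder adj k // LastExitInTree x₀ T σ}) : List V := walk σ.1 x₀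
  have hinj : Injective walkOf := fun σ τ h => Subtype.ext (eq_of_walk_eq hreg hT σ.2 h)
  refine ⟨Set.range walkOf, ?_, ?_, fun δ hδ _ => ?_⟩
  · rintro _ ⟨σ, rfl⟩
    exact isEulerianFromTo_walk hreg hT σ.2
  · rw [Nat.card_range_of_injective hinj, card_lastExitInTree hreg hT hk]
  · have hδ : δ ≠ [] := by rintro rfl; simp at hδ
    refine le_trans ?_ (card_extending_le_rpow hreg hT hk hδ)
    have hsurj : Surjective fun σ : {σ // δ <+: walkOf σ} =>
        (⟨walkOf σ.1, ⟨σ.1, rfl⟩, σ.2⟩ : {l // l ∈ Set.range walkOf ∧ δ <+: l}) := by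
      rintro ⟨_, ⟨σ, rfl⟩, h⟩
      exact ⟨⟨σ, h⟩, rfl⟩
    exact_mod_cast Nat.card_le_card_of_surjective _ hsurj
end

section
/- Let A be a finite alphabet with k = #A ≥ 2, and let ω = ω₁⋯ω_{k^n+n−1} be a de Bruijn sequence of order n in A. Then the first n − 1 letters of ω coincide with its last n − 1 letters; that is, ω_{k^n + i} = ω_i for all i = 1, …, n − 1. -/
open Finset

section Windows

variable {A : Type*} {N m : ℕ}

def window (w : Fin (N + m) → A) (j : Fin N) : Fin (m + 1) → A :=
  fun i => w ⟨j + i, by omega⟩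

def overlap (w : Fin (N + m) → A) (j : Fin (N + 1)) : Fin m → A :=
  fun i => w ⟨j + i, by omega⟩

theorem init_window (w : Fin (N + m) → A) (j : Fin N) :
    Fin.init (window w j) = overlap w j.castSucc :=
  rfl

theorem tail_window (w : Fin (N + m) → A) (j : Fin N) :
    Fin.tail (window w j) = overlap w j.succ := by
  funext i
  exact congrArg w (Fin.ext (by simp [Fin.val_succ]; omega))

theorem bijective_window_of_isDeBruijnWord {w : Fin (N + m) → A}
    (hw : IsDeBruijnWord (m + 1) (N + m) w) : Function.Bijective (window w) := by
  refine ⟨fun a b hab => ?_, fun v => ?_⟩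
  · obtain ⟨j, -, hj⟩ := hw (window w a)
    have ha : (a : ℕ) = j := hj a ⟨by omega, fun i h => rfl⟩
    have hb : (b : ℕ) = j := hj b ⟨by omega, fun i h => congrFun hab.symm i⟩
    exact Fin.ext (ha.trans hb.symm)
  · obtain ⟨j, ⟨hj, hjv⟩, -⟩ := hw v
    exact ⟨⟨j, by omega⟩, funext fun i => hjv i (by omega)⟩

variable [DecidableEq A]

theorem card_overlap_eq_card_init_add (w : Fin (N + m) → A) (u : Fin m → A) :
    #{j | overlap w j = u} =
      #{j | Fin.init (window w j) = u} + if overlap w (Fin.last N) = u then 1 else 0 := by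
  rw [card_filter, Fin.sum_univ_castSucc, ← card_filter]
  rfl

theorem card_overlap_eq_add_card_tail (w : Fin (N + m) → A) (u : Fin m → A) :
    #{j | overlap w j = u} =
      (if overlap w 0 = u then 1 else 0) + #{j | Fin.tail (window w j) = u} := by
  simp only [Fin.card_filter_univ_succ', tail_window]

theorem card_init_eq_card_tail [Fintype A] (u : Fin m → A) :
    #{v : Fin (m + 1) → A | Fin.init v = u} = #{v : Fin (m + 1) → A | Fin.tail v = u} :=
  card_bij' (fun v _ => Fin.cons (v (Fin.last m)) u) (fun v _ => Fin.snoc u (v 0))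
    (by simp) (by simp)
    (fun v hv => by rw [Fin.cons_zero, ← (mem_filter_univ v).1 hv, Fin.snoc_init_self])
    (fun v hv => by rw [Fin.snoc_last, ← (mem_filter_univ v).1 hv, Fin.cons_self_tail])

theorem overlap_last_eq_overlap_zero [Fintype A] {w : Fin (N + m) → A}
    (hw : Function.Bijective (window w)) : overlap w (Fin.last N) = overlap w 0 := by
  set u := overlap w 0
  have h_init_tail : #{j | Fin.init (window w j) = u} = #{j | Fin.tail (window w j) = u} := by
    rw [card_bijective _ hw (t := {v | Fin.init v = u}) (by simp),
      card_bijective _ hw (t := {v | Fin.tail v = u}) (by simp), card_init_eq_card_tail]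
  have h_out := card_overlap_eq_card_init_add w u
  have h_in := card_overlap_eq_add_card_tail w u
  by_contra h
  rw [if_neg h] at h_out
  rw [if_pos rfl] at h_in
  omega

end Windows

theorem statement10_general (A : Type*) [Fintype A] (k : ℕ) (n : ℕ)
    (w : Fin (k ^ n + n - 1) → A) (hw : IsDeBruijnWord n (k ^ n + n - 1) w) :
    ∀ (i : ℕ), i < n - 1 → ∀ (h1 : k ^ n + i < k ^ n + n - 1) (h2 : i < k ^ n + n - 1),
      w ⟨k ^ n + i, h1⟩ = w ⟨i, h2⟩ := by
  classical
  intro i hi h1 h2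
  obtain ⟨m, rfl⟩ : ∃ m, n = m + 1 := ⟨n - 1, by omega⟩
  have h_closed := overlap_last_eq_overlap_zero (bijective_window_of_isDeBruijnWord hw)
  simpa [overlap] using congrFun h_closed ⟨i, hi⟩

/-- The first `n − 1` letters of a de Bruijn sequence of order `n` coincide with its last
`n − 1` letters: in 0-indexed terms, `w (k^n + i) = w i` for all `i < n - 1`. -/
theorem statement10 (A : Type*) [Fintype A] (k : ℕ) (hk : k = Fintype.card A)
    (hk2 : 2 ≤ k) (n : ℕ) (hn : 1 ≤ n)
    (w : Fin (k ^ n + n - 1) → A) (hw : IsDeBruijnWord n (k ^ n + n - 1) w) :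
    ∀ (i : ℕ), i < n - 1 → ∀ (h1 : k ^ n + i < k ^ n + n - 1) (h2 : i < k ^ n + n - 1),
      w ⟨k ^ n + i, h1⟩ = w ⟨i, h2⟩ :=
  statement10_general A k n w hw
end

section
/- Let A be an alphabet with k = #A ≥ 2, let n ≥ 1, and let ω be a word of length k^{n+1} + n over A. Then ω is a de Bruijn sequence of order n + 1 in A if and only if the path induced by ω on the de Bruijn graph G_n(A) is an Eulerian path. -/
/-- The adjacency relation of the de Bruijn graph `G_n(A)`: there is an edge from `u`
to `v` iff `u (i+1) = v i` for all applicable indices (0-indexed). -/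
def deBruijnAdj {A : Type*} (n : ℕ) (u v : Fin n → A) : Prop :=
  ∀ (i : ℕ) (h : i + 1 < n), u ⟨i + 1, h⟩ = v ⟨i, Nat.lt_of_succ_lt h⟩

/-- The path induced on the de Bruijn graph `G_n(A)` by a word `w` of length `ℓ ≥ n`:
the list of vertices `γ_j = w_j ⋯ w_{j+n-1}`, `j = 0, …, ℓ − n`. -/
def inducedPath {A : Type*} (n ℓ : ℕ) (h : n ≤ ℓ) (w : Fin ℓ → A) :
    List (Fin n → A) :=
  List.ofFn (fun j : Fin (ℓ - n + 1) => fun i : Fin n =>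
    w ⟨j.1 + i.1, by have hj := j.2; have hi := i.2; omega⟩)

/-- A list of vertices is an Eulerian path for the adjacency relation `adj`: its
consecutive pairs are pairwise distinct and are exactly the edges of the graph
(so each edge is traversed exactly once). -/
def IsEulerianList {V : Type*} (adj : V → V → Prop) (l : List V) : Prop :=
  (l.zip l.tail).Nodup ∧ ∀ p : V × V, p ∈ l.zip l.tail ↔ adj p.1 p.2


/-!
An edge `u → t` of `G_n(A)` is the same thing as a word `v` of length `n + 1`, namely the one
with `u = Fin.init v` and `t = Fin.tail v` (for `n ≥ 1`). Under this bijection the `j`-th edge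
of the induced path is the factor of length `n + 1` of `ω` at position `j`, so "each word of
length `n + 1` occurs exactly once" and "each edge is traversed exactly once" are the same
statement: both say that `j ↦ ω_j ⋯ ω_{j+n}` is a bijection onto the words of length `n + 1`.
-/

open Function

theorem bijective_iff_nodup_ofFn_comp {X Y : Type*} {E : ℕ} (f : Fin E → X) {φ : X → Y}
    (hφ : Injective φ) (P : Y → Prop) (hP : ∀ y, P y ↔ y ∈ Set.range φ) :
    Bijective f ↔ (List.ofFn (φ ∘ f)).Nodup ∧ ∀ y, y ∈ List.ofFn (φ ∘ f) ↔ P y := by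
  simp only [List.nodup_ofFn, List.mem_ofFn', hP, hφ.of_comp_iff, Bijective, Set.range_comp]
  refine and_congr_right fun _ => ?_
  rw [← Set.ext_iff, ← Set.image_univ (f := φ), (Set.image_injective.2 hφ).eq_iff,
    Set.range_eq_univ]

section

variable {A : Type*} {E n : ℕ}

theorem injective_init_tail (hn : 0 < n) :
    Injective fun v : Fin (n + 1) → A => (Fin.init v, Fin.tail v) := by
  obtain ⟨n, rfl⟩ := Nat.exists_eq_add_one.2 hn
  intro v v' h
  simp only [Prod.mk.injEq] at h
  funext i
  refine Fin.lastCases ?_ (fun j => congrFun h.1 j) i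
  simpa only [Fin.tail, Fin.succ_last] using congrFun h.2 (Fin.last _)

theorem deBruijnAdj_iff_mem_range_init_tail (hn : 0 < n) (u t : Fin n → A) :
    deBruijnAdj n u t ↔
      (u, t) ∈ Set.range fun v : Fin (n + 1) → A => (Fin.init v, Fin.tail v) := by
  obtain ⟨n, rfl⟩ := Nat.exists_eq_add_one.2 hn
  constructor
  · intro hadj
    refine ⟨(Fin.cons (u 0) t : Fin (n + 2) → A), Prod.ext (funext fun i => ?_) rfl⟩
    exact Fin.cases rfl (fun j => (hadj j (by omega)).symm) i
  · rintro ⟨v, hv⟩ i hi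
    simp only [Prod.mk.injEq] at hv
    rw [← hv.1, ← hv.2]
    rfl

def factorAt (w : Fin (E + n) → A) (j : Fin E) : Fin (n + 1) → A :=
  fun i => w ⟨j + i, by omega⟩

theorem isDeBruijnWord_iff_bijective_factorAt (w : Fin (E + n) → A) :
    IsDeBruijnWord (n + 1) (E + n) w ↔ Bijective (factorAt w) := by
  refine (forall_congr' fun v => ?_).trans (bijective_iff_existsUnique _).symm
  have occurs_iff : ∀ j : ℕ, (j + (n + 1) ≤ E + n ∧
      ∀ (i : Fin (n + 1)) (h : j + (i : ℕ) < E + n), w ⟨j + i, h⟩ = v i) ↔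
      ∃ hj : j < E, factorAt w ⟨j, hj⟩ = v := by
    refine fun j => ⟨fun ⟨hj, hv⟩ => ⟨by omega, funext fun i => hv i _⟩, ?_⟩
    rintro ⟨hj, rfl⟩
    exact ⟨by omega, fun i h => rfl⟩
  simp only [occurs_iff]
  constructor
  · rintro ⟨j, ⟨hj, hv⟩, huniq⟩
    exact ⟨⟨j, hj⟩, hv, fun j' hv' => Fin.ext (huniq j' ⟨j'.2, hv'⟩)⟩
  · rintro ⟨j, hv, huniq⟩
    exact ⟨j, ⟨j.2, hv⟩, fun j' ⟨hj', hv'⟩ => congrArg Fin.val (huniq ⟨j', hj'⟩ hv')⟩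

theorem zip_tail_inducedPath (w : Fin (E + n) → A) :
    (inducedPath n (E + n) (Nat.le_add_left n E) w).zip
        (inducedPath n (E + n) (Nat.le_add_left n E) w).tail =
      List.ofFn fun j => (Fin.init (factorAt w j), Fin.tail (factorAt w j)) := by
  apply List.ext_getElem
  · simp [inducedPath]
  · intro j _ _
    simp only [inducedPath, List.getElem_zip, List.getElem_tail, List.getElem_ofFn]
    refine Prod.ext (funext fun i => rfl) (funext fun i => congrArg w (Fin.ext ?_))
    simp only [Fin.val_succ]
    omega

end

theorem statement11_general (A : Type*) (k : ℕ) (n : ℕ) (hn : 1 ≤ n) (w : Fin (k ^ (n + 1) + n) → A) :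
    IsDeBruijnWord (n + 1) (k ^ (n + 1) + n) w ↔
      IsEulerianList (deBruijnAdj n)
        (inducedPath n (k ^ (n + 1) + n) (Nat.le_add_left n _) w) := by
  rw [isDeBruijnWord_iff_bijective_factorAt, IsEulerianList, zip_tail_inducedPath]
  exact bijective_iff_nodup_ofFn_comp _ (injective_init_tail hn) _
    fun p => deBruijnAdj_iff_mem_range_init_tail hn p.1 p.2

/-- A word `w` of length `k^(n+1) + n` over `A` (`#A = k ≥ 2`, `n ≥ 1`) is a de Bruijn
sequence of order `n + 1` iff the path it induces on the de Bruijn graph `G_n(A)` is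
an Eulerian path. -/
theorem statement11 (A : Type*) [Fintype A] (k : ℕ) (hk : k = Fintype.card A)
    (hk2 : 2 ≤ k) (n : ℕ) (hn : 1 ≤ n) (w : Fin (k ^ (n + 1) + n) → A) :
    IsDeBruijnWord (n + 1) (k ^ (n + 1) + n) w ↔
      IsEulerianList (deBruijnAdj n)
        (inducedPath n (k ^ (n + 1) + n) (Nat.le_add_left n _) w) :=
  statement11_general A k n hn w
end

section
/- Let A be an alphabet with k = #A ≥ 2, let m ≤ n, and let ω be a de Bruijn sequence of order m in A. Then the path induced by ω on the de Bruijn graph G_n(A) is a simple path of length k^m + m − n − 1 < k^n (all its vertices are distinct, except that possibly the first equals the last). -/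
/-- If `m ≤ n` and `ω` is a de Bruijn sequence of order `m` (of length `k^m + m − 1 ≥ n`),
then the path it induces on `G_n(A)` is a simple path (all vertices distinct except
possibly the first and last) of length `k^m + m − n − 1 < k^n`. -/
theorem statement12 (A : Type*) [Fintype A] (k : ℕ) (hk : k = Fintype.card A)
    (hk2 : 2 ≤ k) (m n : ℕ) (hmn : m ≤ n) (hn : n ≤ k ^ m + m - 1)
    (w : Fin (k ^ m + m - 1) → A) (hw : IsDeBruijnWord m (k ^ m + m - 1) w) :
    (inducedPath n (k ^ m + m - 1) hn w).dropLast.Nodup ∧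
      (inducedPath n (k ^ m + m - 1) hn w).tail.Nodup ∧
      (inducedPath n (k ^ m + m - 1) hn w).length - 1 = k ^ m + m - n - 1 ∧
      k ^ m + m - n - 1 < k ^ n := by
  have h1 : 1 ≤ k ^ m := Nat.one_le_pow _ _ (by omega)
  have hmn' : k ^ m ≤ k ^ n := Nat.pow_le_pow_right (by omega) hmn
  have hnodup : (inducedPath n (k ^ m + m - 1) hn w).Nodup := by
    rw [inducedPath, List.nodup_ofFn]
    intro j1 j2 hj
    have hv : ∀ (j : Fin (k ^ m + m - 1 - n + 1)) (i : Fin m),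
        j.1 + i.1 < k ^ m + m - 1 := by
      intro j i; have := j.2; have := i.2; omega
    obtain ⟨j, _, huniq⟩ := hw (fun i => w ⟨j1.1 + i.1, hv j1 i⟩)
    have e1 : j1.1 = j := huniq j1.1 ⟨by have := j1.2; omega, fun i h => rfl⟩
    have e2 : j2.1 = j := huniq j2.1 ⟨by have := j2.2; omega, fun i h => by
      have := congrFun hj ⟨i.1, lt_of_lt_of_le i.2 hmn⟩
      exact this.symm⟩
    exact Fin.ext (e1.trans e2.symm)
  refine ⟨hnodup.sublist (List.dropLast_sublist _),
    hnodup.sublist (List.tail_sublist _), ?_, by omega⟩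
  simp only [inducedPath, List.length_ofFn]
  omega
end

section
/- Suppose the base-b IFS defined by the alphabet A satisfies the strong separation condition, and let x ∈ F be a point whose (unique admissible) base-b expansion is uniformly de Bruijn. Then x is badly symbolically approximable: there exists κ > 0 such that for every rational r ∈ F ∩ ℚ, one has |x − r| ≥ κ / (q_sym · (log_b q_sym)^{1/δ}), where q_sym = H_sym(r) and δ = log k / log b. -/
/-- The base-`b` IFS `S_i(x) = (i+x)/b`, `i ∈ A`, satisfies the strong separation
condition: `S_i(F) ∩ S_j(F) = ∅` for all `i ≠ j` in `A`, where `F` is the limit set. -/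
def StrongSep (b : ℕ) (A : Finset ℕ) : Prop :=
  ∀ i ∈ A, ∀ j ∈ A, i ≠ j →
    Disjoint ((fun x : ℝ => ((i : ℝ) + x) / (b : ℝ)) '' limitSet b A)
      ((fun x : ℝ => ((j : ℝ) + x) / (b : ℝ)) '' limitSet b A)

/-- `x` is badly symbolically approximable (with respect to `ψ_*`): there is `κ > 0`
such that `|x − r| ≥ κ / (q_sym · (log_b q_sym)^(1/δ))` for every rational `r ∈ F ∩ ℚ`,
where `q_sym = H_sym(r)`. Here the symbolic height is encoded by quantifying over all
preperiod/period pairs `(i, p)` of expansions of `r` with digits in `A` (the bound for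
the minimal such pair is equivalent to the bound for all of them, by monotonicity of
`q ↦ q(log_b q)^(1/δ)`). -/
noncomputable def BadlySymbolicallyApproximable (b : ℕ) (A : Finset ℕ) (δ : ℝ)
    (x : ℝ) : Prop :=
  ∃ κ : ℝ, 0 < κ ∧ ∀ (r : ℝ) (i p : ℕ), 0 < p →
    (∃ τ : ℕ → ℕ, (∀ t, τ t ∈ A) ∧ r = baseVal b τ ∧ ∀ t, i ≤ t → τ (t + p) = τ t) →
    κ / (((b : ℝ) ^ i * ((b : ℝ) ^ p - 1)) *
        Real.logb b ((b : ℝ) ^ i * ((b : ℝ) ^ p - 1)) ^ (1 / δ)) ≤ |x - r|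

/-! If the expansions of `x` and of `r` first differ at position `m`, strong separation gives
`|x - r| ≥ b^(-m) / (b (b - 1))`. If `r` has preperiod `i` and period `p` and `n` is a de Bruijn
order of `ω` with `k^n > i + p`, the two expansions differ before position `i + p + n`: otherwise
the word of length `n` at position `i` would occur again at position `i + p` of the de Bruijn
prefix. Bounded gaps of `B_ω` allow `n ≤ log_k (i + p) + O(1)`, hence
`b^m ≲ b^(i+p) (i + p)^(1/δ) ≲ q_sym (log_b q_sym)^(1/δ)`. -/

open Finset

section BaseExpansion

variable {b : ℕ} {A : Finset ℕ}

lemma hasSum_div_pow_succ (hb : 1 < b) (c : ℝ) :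
    HasSum (fun i : ℕ => c / (b : ℝ) ^ (i + 1)) (c / ((b : ℝ) - 1)) := by
  have hb' : (1 : ℝ) < b := by exact_mod_cast hb
  have hgeom := (hasSum_geometric_of_lt_one (inv_nonneg.2 (by positivity))
    (inv_lt_one_of_one_lt₀ hb')).mul_left (c / b)
  have hterm : (fun i : ℕ => c / (b : ℝ) ^ (i + 1)) = fun i => c / b * (b : ℝ)⁻¹ ^ i := by
    funext i
    rw [inv_pow, pow_succ', ← div_div, div_eq_mul_inv _ ((b : ℝ) ^ i)]
  have hsum : c / ((b : ℝ) - 1) = c / b * (1 - (b : ℝ)⁻¹)⁻¹ := by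
    have : (b : ℝ) - 1 ≠ 0 := by linarith
    field_simp
  rwa [hterm, hsum]

lemma summable_baseVal (hb : 1 < b) {M : ℕ} {σ : ℕ → ℕ} (hσ : ∀ i, σ i ≤ M) :
    Summable (fun i : ℕ => (σ i : ℝ) / (b : ℝ) ^ (i + 1)) :=
  (hasSum_div_pow_succ hb M).summable.of_nonneg_of_le (fun _ => by positivity)
    fun i => div_le_div_of_nonneg_right (by exact_mod_cast hσ i) (by positivity)

lemma baseVal_const (hb : 1 < b) (c : ℕ) : baseVal b (fun _ => c) = c / ((b : ℝ) - 1) :=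
  (hasSum_div_pow_succ hb c).tsum_eq

lemma baseVal_le (hb : 1 < b) {M : ℕ} {σ : ℕ → ℕ} (hσ : ∀ i, σ i ≤ M) :
    baseVal b σ ≤ M / ((b : ℝ) - 1) :=
  hasSum_le (fun i => div_le_div_of_nonneg_right (by exact_mod_cast hσ i) (by positivity))
    (summable_baseVal hb hσ).hasSum (hasSum_div_pow_succ hb M)

lemma le_baseVal (hb : 1 < b) {m M : ℕ} {σ : ℕ → ℕ} (hmσ : ∀ i, m ≤ σ i) (hσ : ∀ i, σ i ≤ M) :
    m / ((b : ℝ) - 1) ≤ baseVal b σ :=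
  hasSum_le (fun i => div_le_div_of_nonneg_right (by exact_mod_cast hmσ i) (by positivity))
    (hasSum_div_pow_succ hb m) (summable_baseVal hb hσ).hasSum

lemma baseVal_eq_head_add_tail (hb : 1 < b) {M : ℕ} {σ : ℕ → ℕ} (hσ : ∀ i, σ i ≤ M) :
    baseVal b σ = (σ 0 + baseVal b (fun i => σ (i + 1))) / b := by
  rw [baseVal, (summable_baseVal hb hσ).tsum_eq_zero_add, baseVal, add_div, ← tsum_div_const]
  congr 1
  · simp
  · congr 1
    funext i
    rw [pow_succ _ (i + 1), div_div]

lemma digit_le_of_subset_range (hAb : A ⊆ range b) {σ : ℕ → ℕ} (hσ : ∀ i, σ i ∈ A) (i : ℕ) :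
    σ i ≤ b :=
  (mem_range.1 (hAb (hσ i))).le

/-- If `max A = b - 1` and `min A = 0`, then `0, 1 ∈ F` and `S_a(1) = S_{a+1}(0)`. -/
lemma StrongSep.max'_add_one_lt (hb : 1 < b) (hAb : A ⊆ range b) (hsep : StrongSep b A)
    {a : ℕ} (ha : a ∈ A) (ha' : a + 1 ∈ A) : A.max' ⟨a, ha⟩ + 1 < b + A.min' ⟨a, ha⟩ := by
  by_contra hcon
  have hmax : A.max' ⟨a, ha⟩ = b - 1 := by
    have := mem_range.1 (hAb (A.max'_mem ⟨a, ha⟩))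
    omega
  have hmin : A.min' ⟨a, ha⟩ = 0 := by omega
  have hb1 : (b : ℝ) - 1 ≠ 0 := by
    have : (1 : ℝ) < b := by exact_mod_cast hb
    linarith
  have h1 : (1 : ℝ) ∈ limitSet b A := by
    refine ⟨fun _ => b - 1, fun _ => hmax ▸ A.max'_mem _, ?_⟩
    rw [baseVal_const hb, Nat.cast_sub hb.le, Nat.cast_one, div_self hb1]
  have h0 : (0 : ℝ) ∈ limitSet b A :=
    ⟨fun _ => 0, fun _ => hmin ▸ A.min'_mem _, by rw [baseVal_const hb]; simp⟩
  exact Set.disjoint_left.1 (hsep a ha (a + 1) ha' (by omega)) ⟨1, h1, rfl⟩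
    ⟨0, h0, by push_cast; ring⟩

lemma baseVal_sub_ge_of_head_lt (hb : 1 < b) (hAb : A ⊆ range b) (hsep : StrongSep b A)
    {σ τ : ℕ → ℕ} (hσ : ∀ i, σ i ∈ A) (hτ : ∀ i, τ i ∈ A) (hlt : σ 0 < τ 0) :
    1 / ((b : ℝ) * ((b : ℝ) - 1)) ≤ baseVal b τ - baseVal b σ := by
  have hA : A.Nonempty := ⟨_, hσ 0⟩
  have hb' : (2 : ℝ) ≤ b := by exact_mod_cast hb
  -- the gap between the first digits outweighs the spread `(max A - min A) / (b - 1)` of the tails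
  have hgap : 1 ≤ ((τ 0 : ℝ) - σ 0) * ((b : ℝ) - 1) + A.min' hA - A.max' hA := by
    rcases Nat.lt_or_ge (σ 0 + 1) (τ 0) with h2 | h1
    · have hmax : (A.max' hA : ℝ) + 1 ≤ b := by exact_mod_cast mem_range.1 (hAb (A.max'_mem hA))
      have hmin : (0 : ℝ) ≤ A.min' hA := by positivity
      have h2' : (2 : ℝ) ≤ τ 0 - σ 0 := by
        have : (σ 0 : ℝ) + 2 ≤ τ 0 := by exact_mod_cast h2
        linarith
      linarith [mul_le_mul_of_nonneg_right h2' (show (0 : ℝ) ≤ b - 1 by linarith)]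
    · have hτ0 : τ 0 = σ 0 + 1 := by omega
      have h : (A.max' hA : ℝ) + 2 ≤ b + A.min' hA := by
        exact_mod_cast hsep.max'_add_one_lt hb hAb (hσ 0) (hτ0 ▸ hτ 0)
      rw [hτ0, Nat.cast_succ]
      linarith
  have hu := baseVal_le hb (M := A.max' hA) (σ := fun i => σ (i + 1))
    fun i => A.le_max' _ (hσ (i + 1))
  have hv := le_baseVal hb (m := A.min' hA) (σ := fun i => τ (i + 1))
    (fun i => A.min'_le _ (hτ (i + 1))) fun i => digit_le_of_subset_range hAb hτ (i + 1)
  have hgap' := div_le_div_of_nonneg_right hgap (show (0 : ℝ) ≤ b - 1 by linarith)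
  rw [sub_div, add_div, mul_div_assoc, div_self (by linarith), mul_one] at hgap'
  rw [baseVal_eq_head_add_tail hb (digit_le_of_subset_range hAb hσ),
    baseVal_eq_head_add_tail hb (digit_le_of_subset_range hAb hτ), div_sub_div_same, mul_comm,
    ← div_div, div_le_div_iff_of_pos_right (by linarith)]
  linarith

lemma abs_baseVal_sub_ge_of_eqOn_of_ne (hb : 1 < b) (hAb : A ⊆ range b)
    (hsep : StrongSep b A) {m : ℕ} :
    ∀ {σ τ : ℕ → ℕ}, (∀ i, σ i ∈ A) → (∀ i, τ i ∈ A) → (∀ t < m, σ t = τ t) → σ m ≠ τ m →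
      1 / ((b : ℝ) * ((b : ℝ) - 1)) / (b : ℝ) ^ m ≤ |baseVal b σ - baseVal b τ| := by
  induction m with
  | zero =>
    intro σ τ hσ hτ _ hne
    rw [pow_zero, div_one]
    rcases Nat.lt_or_gt_of_ne hne with hlt | hgt
    · exact le_abs.2 (Or.inr (by
        linarith [baseVal_sub_ge_of_head_lt hb hAb hsep hσ hτ hlt]))
    · exact le_abs.2 (Or.inl (baseVal_sub_ge_of_head_lt hb hAb hsep hτ hσ hgt))
  | succ m ih =>
    intro σ τ hσ hτ hagree hne
    have htail := ih (fun i => hσ (i + 1)) (fun i => hτ (i + 1))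
      (fun t ht => hagree (t + 1) (by omega)) hne
    rw [baseVal_eq_head_add_tail hb (digit_le_of_subset_range hAb hσ),
      baseVal_eq_head_add_tail hb (digit_le_of_subset_range hAb hτ), hagree 0 (by omega),
      div_sub_div_same, add_sub_add_left_eq_sub, abs_div, Nat.abs_cast, pow_succ, ← div_div]
    exact div_le_div_of_nonneg_right htail (by positivity)

lemma abs_baseVal_sub_ge_of_exists_ne (hb : 1 < b) (hAb : A ⊆ range b)
    (hsep : StrongSep b A) {σ τ : ℕ → ℕ} (hσ : ∀ i, σ i ∈ A) (hτ : ∀ i, τ i ∈ A) {m : ℕ}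
    (hne : ∃ t < m, σ t ≠ τ t) :
    1 / ((b : ℝ) * ((b : ℝ) - 1)) / (b : ℝ) ^ m ≤ |baseVal b σ - baseVal b τ| := by
  classical
  have hex : ∃ t, σ t ≠ τ t := hne.imp fun _ h => h.2
  obtain ⟨t, htm, ht⟩ := hne
  have hb1 : 0 < (b : ℝ) - 1 := by
    have : (1 : ℝ) < b := by exact_mod_cast hb
    linarith
  calc 1 / ((b : ℝ) * ((b : ℝ) - 1)) / (b : ℝ) ^ m
      ≤ 1 / ((b : ℝ) * ((b : ℝ) - 1)) / (b : ℝ) ^ Nat.find hex := by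
        gcongr
        · exact_mod_cast hb.le
        · exact ((Nat.find_min' hex ht).trans_lt htm).le
    _ ≤ |baseVal b σ - baseVal b τ| := abs_baseVal_sub_ge_of_eqOn_of_ne hb hAb hsep hσ hτ
        (fun s hs => not_not.1 (Nat.find_min hex hs)) (Nat.find_spec hex)

end BaseExpansion

/-- Otherwise the word `τ i, …, τ (i + n - 1)` occurs in the de Bruijn prefix at both
positions `i` and `i + p`. -/
lemma dbPrefix.exists_ne_of_eventually_periodic {A : Finset ℕ} {n : ℕ} {ω τ : ℕ → ℕ}
    (hdb : dbPrefix A n ω) (hτ : ∀ t, τ t ∈ A) {i p : ℕ} (hp : 0 < p)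
    (hper : ∀ t, i ≤ t → τ (t + p) = τ t) (hn : i + p + 1 ≤ A.card ^ n) :
    ∃ t < i + p + n, ω t ≠ τ t := by
  by_contra! hagree
  obtain ⟨j, -, huniq⟩ := hdb (fun s => τ (i + s)) fun s _ => hτ _
  have hi := huniq i ⟨by omega, fun s hs => hagree (i + s) (by omega)⟩
  have hip := huniq (i + p) ⟨by omega, fun s hs => by
    rw [hagree _ (by omega), add_right_comm, hper _ (by omega)]⟩
  omega

lemma exists_ne_lt_of_deBruijnSet_gap {A : Finset ℕ} (hA : 1 < A.card) {ω τ : ℕ → ℕ} {g : ℕ}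
    (hg : ∀ N, ∃ n ∈ deBruijnSet A ω, N < n ∧ n ≤ N + g) (hτ : ∀ t, τ t ∈ A) {i p : ℕ}
    (hp : 0 < p) (hper : ∀ t, i ≤ t → τ (t + p) = τ t) :
    ∃ t < i + p + Nat.clog A.card (i + p + 1) + g, ω t ≠ τ t := by
  obtain ⟨n, ⟨-, hdb⟩, hlt, hle⟩ := hg (Nat.clog A.card (i + p + 1))
  obtain ⟨t, ht, hne⟩ := hdb.exists_ne_of_eventually_periodic hτ hp hper
    ((Nat.le_pow_clog hA _).trans (Nat.pow_le_pow_right (by omega) hlt.le))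
  exact ⟨t, by omega, hne⟩

lemma Nat.pow_clog_succ_le_mul {k m : ℕ} (hk : 1 < k) (hm : 0 < m) :
    k ^ Nat.clog k (m + 1) ≤ k * m := by
  have hlt := Nat.pow_pred_clog_lt_self hk (show 1 < m + 1 by omega)
  have hpos : 0 < Nat.clog k (m + 1) := Nat.clog_pos hk (by omega)
  rw [Nat.pred_eq_sub_one] at hlt
  calc k ^ Nat.clog k (m + 1) = k * k ^ (Nat.clog k (m + 1) - 1) := by
        rw [← _root_.pow_succ', Nat.sub_add_cancel hpos]
    _ ≤ k * m := Nat.mul_le_mul_left k (by omega)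

lemma exists_pos_div_le_of_nonneg {D c : ℝ} (hD : 0 ≤ D) (hc : 0 < c) : ∃ κ > 0, κ / D ≤ c := by
  rcases hD.eq_or_lt with rfl | hD
  · exact ⟨1, one_pos, by rw [div_zero]; exact hc.le⟩
  · exact ⟨c * D, by positivity, (mul_div_cancel_right₀ c hD.ne').le⟩

/-- `H_sym` of a rational with preperiod `i` and period `p`. -/
noncomputable def symHeight (b i p : ℕ) : ℝ := (b : ℝ) ^ i * ((b : ℝ) ^ p - 1)

namespace symHeight

variable {b k i p : ℕ}

lemma pow_add_le_two_mul (hb : 1 < b) (hp : 0 < p) :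
    (b : ℝ) ^ (i + p) ≤ 2 * symHeight b i p := by
  have : (2 : ℝ) ≤ (b : ℝ) ^ p :=
    calc (2 : ℝ) ≤ b := by exact_mod_cast hb
      _ ≤ (b : ℝ) ^ p := le_self_pow₀ (by exact_mod_cast hb.le) hp.ne'
  rw [symHeight, pow_add, mul_left_comm]
  exact mul_le_mul_of_nonneg_left (by linarith) (by positivity)

lemma one_le (hb : 1 < b) (hp : 0 < p) : 1 ≤ symHeight b i p := by
  have hb' : (1 : ℝ) ≤ b := by exact_mod_cast hb.le
  have : (2 : ℝ) ≤ (b : ℝ) ^ p :=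
    calc (2 : ℝ) ≤ b := by exact_mod_cast hb
      _ ≤ (b : ℝ) ^ p := le_self_pow₀ hb' hp.ne'
  exact one_le_mul_of_one_le_of_one_le (one_le_pow₀ hb') (by linarith)

lemma pos (hb : 1 < b) (hp : 0 < p) : 0 < symHeight b i p :=
  zero_lt_one.trans_le (one_le hb hp)

lemma add_le_two_mul_logb (hb : 1 < b) (hp : 0 < p) (h2 : 2 ≤ i + p) :
    (i + p : ℝ) ≤ 2 * Real.logb b (symHeight b i p) := by
  have hb' : (1 : ℝ) < b := by exact_mod_cast hb
  have hle : (b : ℝ) ^ (i + p) ≤ b * symHeight b i p :=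
    (pow_add_le_two_mul hb hp).trans
      (mul_le_mul_of_nonneg_right (by exact_mod_cast hb) (pos hb hp).le)
  have hlog := Real.logb_le_logb_of_le hb' (by positivity) hle
  rw [Real.logb_pow, Real.logb_self_eq_one hb', Real.logb_mul (by positivity) (pos hb hp).ne',
    Real.logb_self_eq_one hb', mul_one] at hlog
  have : (2 : ℝ) ≤ i + p := by exact_mod_cast h2
  push_cast at hlog
  linarith

lemma pow_add_clog_le (hb : 1 < b) (hk : 1 < k) (hp : 0 < p) (h2 : 2 ≤ i + p) :
    (b : ℝ) ^ (i + p + Nat.clog k (i + p + 1)) ≤ 2 * (2 * k : ℝ) ^ Real.logb k b *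
      (symHeight b i p * Real.logb b (symHeight b i p) ^ Real.logb k b) := by
  set e := Real.logb k b
  set Q := symHeight b i p
  set N := Nat.clog k (i + p + 1)
  have hk' : (1 : ℝ) < k := by exact_mod_cast hk
  have he : 0 ≤ e := Real.logb_nonneg hk' (by exact_mod_cast hb.le)
  have hL := add_le_two_mul_logb hb hp h2
  have hkN : ((k ^ N : ℕ) : ℝ) ≤ 2 * k * Real.logb b Q :=
    calc ((k ^ N : ℕ) : ℝ) ≤ ((k * (i + p) : ℕ) : ℝ) := by
          exact_mod_cast Nat.pow_clog_succ_le_mul hk (by omega)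
      _ ≤ 2 * k * Real.logb b Q := by push_cast; nlinarith
  -- `b = k ^ e`, so `b ^ N = (k ^ N) ^ e`
  have hbN : (b : ℝ) ^ N ≤ (2 * k : ℝ) ^ e * Real.logb b Q ^ e :=
    calc (b : ℝ) ^ N = ((k : ℝ) ^ e) ^ N := by
          rw [Real.rpow_logb (by positivity) hk'.ne' (by positivity)]
      _ = ((k : ℝ) ^ N) ^ e := Real.rpow_pow_comm (by positivity) _ _
      _ ≤ (2 * k * Real.logb b Q) ^ e :=
          Real.rpow_le_rpow (by positivity) (by exact_mod_cast hkN) he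
      _ = (2 * k : ℝ) ^ e * Real.logb b Q ^ e := Real.mul_rpow (by positivity) (by linarith)
  calc (b : ℝ) ^ (i + p + N) = (b : ℝ) ^ (i + p) * (b : ℝ) ^ N := pow_add _ _ _
    _ ≤ (2 * Q) * ((2 * k : ℝ) ^ e * Real.logb b Q ^ e) :=
        mul_le_mul (pow_add_le_two_mul hb hp) hbN (by positivity)
          (by linarith [pos (i := i) hb hp])
    _ = _ := by ring

lemma exists_pos_div_le (hb : 1 < b) (hk : 1 < k) {c : ℝ} (hc : 0 < c) :
    ∃ κ > 0, ∀ i p : ℕ, 0 < p →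
      κ / (symHeight b i p * Real.logb b (symHeight b i p) ^ Real.logb k b) ≤
        c / (b : ℝ) ^ (i + p + Nat.clog k (i + p + 1)) := by
  set e := Real.logb k b
  have hb' : (1 : ℝ) < b := by exact_mod_cast hb
  have hψ : ∀ {i p : ℕ}, 0 < p → 0 ≤ symHeight b i p * Real.logb b (symHeight b i p) ^ e :=
    fun hp => mul_nonneg (pos hb hp).le
      (Real.rpow_nonneg (Real.logb_nonneg hb' (one_le hb hp)) e)
  -- `(i, p) = (0, 1)` is the only pair with `i + p < 2`; its denominator vanishes when `b = 2`
  obtain ⟨κ₀, hκ₀, hκ₀le⟩ := exists_pos_div_le_of_nonneg (hψ (i := 0) one_pos)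
    (c := c / (b : ℝ) ^ (0 + 1 + Nat.clog k (0 + 1 + 1))) (by positivity)
  have hC : 0 < 2 * (2 * k : ℝ) ^ e := by positivity
  refine ⟨min (c / (2 * (2 * k : ℝ) ^ e)) κ₀, lt_min (by positivity) hκ₀, fun i p hp => ?_⟩
  rcases Nat.lt_or_ge (i + p) 2 with hsmall | h2
  · obtain ⟨rfl, rfl⟩ : i = 0 ∧ p = 1 := by omega
    exact (div_le_div_of_nonneg_right (min_le_right _ _) (hψ hp)).trans hκ₀le
  · have hψpos : 0 < symHeight b i p * Real.logb b (symHeight b i p) ^ e := by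
      have hL : 0 < Real.logb b (symHeight b i p) := by
        have := add_le_two_mul_logb hb hp h2
        have : (2 : ℝ) ≤ i + p := by exact_mod_cast h2
        linarith
      exact mul_pos (pos hb hp) (Real.rpow_pos_of_pos hL e)
    refine (div_le_div_of_nonneg_right (min_le_left _ _) hψpos.le).trans ?_
    rw [div_div, div_le_div_iff₀ (mul_pos hC hψpos) (by positivity)]
    exact mul_le_mul_of_nonneg_left (pow_add_clog_le hb hk hp h2) hc.le

end symHeight

/-- Theorem: if the base-`b` IFS defined by `A` satisfies the strong separation
condition, then every `x ∈ F` whose base-`b` expansion is uniformly de Bruijn is badly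
symbolically approximable. -/
theorem statement14 (b : ℕ) (hb : 2 ≤ b) (A : Finset ℕ) (hAb : A ⊆ Finset.range b)
    (k : ℕ) (hk : k = A.card) (hk2 : 2 ≤ k)
    (hsep : StrongSep b A)
    (δ : ℝ) (hδ : δ = Real.log k / Real.log b)
    (x : ℝ) (ω : ℕ → ℕ) (hωA : ∀ i, ω i ∈ A) (hω : UniformlyDeBruijn A ω)
    (hx : x = baseVal b ω) :
    BadlySymbolicallyApproximable b A δ x := by
  subst hk hx
  obtain ⟨g, hg⟩ := hω
  set ε : ℝ := 1 / ((b : ℝ) * ((b : ℝ) - 1))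
  have hε : 0 < ε / (b : ℝ) ^ g := by
    have : (1 : ℝ) < b := by exact_mod_cast hb
    have : (0 : ℝ) < b - 1 := by linarith
    positivity
  obtain ⟨κ, hκ, hκle⟩ := symHeight.exists_pos_div_le hb hk2 hε
  refine ⟨κ, hκ, fun r i p hp ⟨τ, hτA, hr, hper⟩ => ?_⟩
  have hexp : 1 / δ = Real.logb A.card b := by rw [hδ, one_div_div]; rfl
  rw [hexp, hr]
  calc _ ≤ _ := hκle i p hp
    _ = ε / (b : ℝ) ^ (i + p + Nat.clog A.card (i + p + 1) + g) := by
        rw [div_div, ← pow_add, add_comm g]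
    _ ≤ |baseVal b ω - baseVal b τ| := abs_baseVal_sub_ge_of_exists_ne hb hAb hsep hωA hτA
        (exists_ne_lt_of_deBruijnSet_gap hk2 hg hτA hp hper)
end

section
/- Let ω ∈ A^ℕ be uniformly de Bruijn with ℓ the maximal gap size of B_ω, and let τ ∈ A^ℕ be eventually periodic, say τ_{n+ (j−i)} = τ_n for all n > i, where 0 ≤ i < j and j ≥ ℓ. If m is the largest index such that ω and τ agree in their first m letters, then b^{−m} ≥ b^{−ℓ} / (b^j · j^{1/δ}), where k = #A ≥ 2, b ≥ 2 is any integer with b ≥ k, and δ = log k / log b; equivalently, m ≤ j + ℓ + (1/δ)·log_b j. -/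
/-- Key estimate in the proof of Theorem "uniformly de Bruijn ⟹ badly symbolically
approximable": if `ω` is uniformly de Bruijn with all gaps of `B_ω` of size at most `ℓ`,
and `τ` is eventually periodic with preperiod `i` and period `j − i` (`0 ≤ i < j`,
`j ≥ ℓ`), and `m` is the largest index such that `ω` and `τ` agree in their first `m`
letters, then `b^(−m) ≥ b^(−ℓ) / (b^j · j^(1/δ))` where `δ = log k / log b`. -/
theorem statement17 (A : Finset ℕ) (k : ℕ) (hk : k = A.card) (hk2 : 2 ≤ k)
    (b : ℕ) (hbk : k ≤ b)
    (δ : ℝ) (hδ : δ = Real.log k / Real.log b)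
    (ω : ℕ → ℕ) (hωA : ∀ t, ω t ∈ A)
    (ℓ : ℕ) (hgap : ∀ N : ℕ, ∃ n ∈ deBruijnSet A ω, N < n ∧ n ≤ N + ℓ)
    (τ : ℕ → ℕ) (hτA : ∀ t, τ t ∈ A)
    (i j : ℕ) (hij : i < j) (hjℓ : ℓ ≤ j)
    (hper : ∀ t : ℕ, i ≤ t → τ (t + (j - i)) = τ t)
    (m : ℕ) (hagree : ∀ t < m, ω t = τ t) (hdiff : ω m ≠ τ m) :
    (b : ℝ) ^ (-(ℓ : ℝ)) / ((b : ℝ) ^ (j : ℝ) * (j : ℝ) ^ (1 / δ)) ≤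
      (b : ℝ) ^ (-(m : ℝ)) := by
  have hj1 : 1 ≤ j := by omega
  set N := Nat.log k j with hN
  have hkNj : k ^ N ≤ j := Nat.pow_log_le_self k (by omega)
  have hjkN : j < k ^ (N + 1) := Nat.lt_pow_succ_log_self (by omega) j
  obtain ⟨n, ⟨hn0, hdb⟩, hNn, hnNl⟩ := hgap N
  have hjn : j < k ^ n :=
    lt_of_lt_of_le hjkN (Nat.pow_le_pow_right (by omega) (by omega))
  have hm : m < j + n := by
    by_contra h
    push_neg at h
    obtain ⟨j0, hj0, huniq⟩ := hdb (fun t => ω (i + t)) (fun t _ => hωA _)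
    have hAcard : A.card = k := hk.symm
    have h1 : i + n ≤ A.card ^ n + n - 1 ∧ ∀ t < n, ω (i + t) = ω (i + t) := by
      refine ⟨?_, fun t _ => rfl⟩
      rw [hAcard]; omega
    have h2 : j + n ≤ A.card ^ n + n - 1 ∧ ∀ t < n, ω (j + t) = ω (i + t) := by
      constructor
      · rw [hAcard]; omega
      · intro t ht
        have e1 : ω (j + t) = τ (j + t) := hagree _ (by omega)
        have e2 : ω (i + t) = τ (i + t) := hagree _ (by omega)
        have e3 : τ (i + t + (j - i)) = τ (i + t) := hper _ (by omega)
        have e4 : i + t + (j - i) = j + t := by omega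
        rw [e1, e2, ← e3, e4]
    have hi := huniq i h1
    have hj := huniq j h2
    omega
  -- real part
  have hb1 : (1 : ℝ) < (b : ℝ) := by exact_mod_cast (by omega : 1 < b)
  have bpos : (0 : ℝ) < (b : ℝ) := by linarith
  have jpos : (0 : ℝ) < (j : ℝ) := by exact_mod_cast hj1
  have hk1 : (1 : ℝ) < (k : ℝ) := by exact_mod_cast (by omega : 1 < k)
  have hlogb : 0 < Real.log b := Real.log_pos hb1
  have hlogk : 0 < Real.log k := Real.log_pos hk1
  have h1δ : 1 / δ = Real.log b / Real.log k := by
    rw [hδ, one_div_div]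
  have key : (b : ℝ) ^ (N : ℝ) ≤ (j : ℝ) ^ (1 / δ) := by
    rw [Real.rpow_def_of_pos jpos, Real.rpow_def_of_pos bpos, Real.exp_le_exp]
    have hNk : (N : ℝ) * Real.log k ≤ Real.log j := by
      have hc : ((k : ℝ)) ^ N ≤ (j : ℝ) := by exact_mod_cast hkNj
      have := Real.log_le_log (by positivity) hc
      rwa [Real.log_pow] at this
    rw [h1δ, ← mul_div_assoc, le_div_iff₀ hlogk]
    nlinarith [mul_le_mul_of_nonneg_left hNk hlogb.le]
  have hmle : (m : ℝ) ≤ (ℓ : ℝ) + ((j : ℝ) + (N : ℝ)) := by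
    have : m ≤ ℓ + (j + N) := by omega
    exact_mod_cast this
  calc (b : ℝ) ^ (-(ℓ : ℝ)) / ((b : ℝ) ^ (j : ℝ) * (j : ℝ) ^ (1 / δ))
      ≤ (b : ℝ) ^ (-(ℓ : ℝ)) / ((b : ℝ) ^ (j : ℝ) * (b : ℝ) ^ (N : ℝ)) := by
        gcongr
    _ = (b : ℝ) ^ (-(ℓ : ℝ) - ((j : ℝ) + (N : ℝ))) := by
        rw [← Real.rpow_add bpos, ← Real.rpow_sub bpos]
    _ ≤ (b : ℝ) ^ (-(m : ℝ)) := by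
        apply Real.rpow_le_rpow_of_exponent_le hb1.le
        linarith
end
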